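/- arXiv:2011.01592 — 7 statements merged into one kernel-verified Lean document; each statement's English description precedes it below -/
import Mathlib

section
/- For all integers p, q, k with p ≥ 3, 1 ≤ q ≤ p−2 and k ≥ q, we have g^k_q(p) ≤ 2^{2k(p−2)/q + 1}, where the exponent 2k(p−2)/q + 1 is a real number. -/
open Finset

/-- A Gallai coloring: a symmetric edge-coloring of the complete graph on `V`
with no rainbow triangle. -/
def IsGallai {V β : Type*} (c : V → V → β) : Prop :=
  (∀ a b, c a b = c b a) ∧
  ∀ a b d : V, a ≠ b → a ≠ d → b ≠ d →
    ¬(c a b ≠ c a d ∧ c a b ≠ c b d ∧ c a d ≠ c b d)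

/-- The set of colors appearing on edges inside the vertex set `S`. -/
def colorsOn {V β : Type*} [DecidableEq V] [DecidableEq β]
    (c : V → V → β) (S : Finset V) : Finset β :=
  ((S ×ˢ S).filter fun p => p.1 ≠ p.2).image fun p => c p.1 p.2

/-- `gallaiNum k q p` is the smallest positive `n` such that every Gallai-`k`-coloring
of `K_n` contains a set of `p` vertices whose induced edges use at most `q` colors. -/
noncomputable def gallaiNum (k q p : ℕ) : ℕ :=
  sInf {n : ℕ | 0 < n ∧ ∀ c : Fin n → Fin n → Fin k, IsGallai c →
    ∃ S : Finset (Fin n), S.card = p ∧ (colorsOn c S).card ≤ q}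

/-!
In a Gallai coloring of a set `S` with `|S| ≥ 2`, some vertex sees at least `|S| / 3` vertices
of `S` in one color: otherwise, fixing `u ∈ S`, double counting the pairs `(w, x)` with
`c w x = c u x ≠ c u w` gives incompatible bounds, since the absence of rainbow triangles puts
every `x` into one of two monochromatic neighbourhoods or into such a pair with `w`.
Iterating inside these neighbourhoods, `2 * 3 ^ a` vertices carry a chain `v 0, …, v (a + 1)` in
which every `v i` sends a single color to all later vertices. Some `q` of the `k` colors are sent
by at least `q (a + 1) / k > p - 2` chain vertices; these and the last vertex of the chain span
only those `q` colors. Taking `a = ⌊k (p - 2) / q⌋` and `3 ^ a ≤ 4 ^ a` gives the bound.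
-/

theorem Finset.exists_subset_card_eq_mul_sum_le {α : Type*} [DecidableEq α] (f : α → ℕ)
    {q : ℕ} (s : Finset α) (hq : q ≤ #s) :
    ∃ t ⊆ s, #t = q ∧ q * ∑ x ∈ s, f x ≤ #s * ∑ x ∈ t, f x := by
  induction s using Finset.strongInduction with
  | H s ih =>
  rcases hq.eq_or_lt with rfl | hlt
  · exact ⟨s, Subset.rfl, rfl, le_rfl⟩
  obtain ⟨m, hm, hmin⟩ := s.exists_min_image f (card_pos.mp (by omega))
  have hcard : #(s.erase m) + 1 = #s := card_erase_add_one hm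
  obtain ⟨t, hts, htq, ht⟩ :=
    ih (s.erase m) (erase_ssubset hm) (by omega)
  refine ⟨t, hts.trans (erase_subset m s), htq, ?_⟩
  have hm_le : #(s.erase m) * f m ≤ ∑ x ∈ s.erase m, f x := by
    simpa using card_nsmul_le_sum (s.erase m) f (f m) fun x hx => hmin x (mem_of_mem_erase hx)
  rw [← sum_erase_add s f hm, ← hcard]
  obtain hn | hn := (#(s.erase m)).eq_zero_or_pos
  · simp [show q = 0 by omega]
  refine Nat.le_of_mul_le_mul_left ?_ hn
  nlinarith [Nat.mul_le_mul_left q hm_le, Nat.mul_le_mul_left (#(s.erase m) + 1) ht]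

theorem exists_card_eq_mul_card_le_card_filter_mem {ι β : Type*} [Fintype β] [DecidableEq β]
    (f : ι → β) (s : Finset ι) {q : ℕ} (hq : q ≤ Fintype.card β) :
    ∃ Q : Finset β, #Q = q ∧ q * #s ≤ Fintype.card β * #(s.filter fun i => f i ∈ Q) := by
  obtain ⟨Q, -, hQ, hsum⟩ :=
    exists_subset_card_eq_mul_sum_le (fun b => #(s.filter fun i => f i = b)) univ hq
  refine ⟨Q, hQ, ?_⟩
  rwa [sum_card_fiberwise_eq_card_filter, sum_card_fiberwise_eq_card_filter, card_univ,
    filter_true_of_mem fun i _ => mem_univ (f i)] at hsum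

theorem Finset.le_of_mem_insert_of_subset_range {I : Finset ℕ} {m i : ℕ} (hI : I ⊆ range m)
    (hi : i ∈ insert m I) : i ≤ m := by
  rcases mem_insert.mp hi with rfl | hi
  exacts [le_rfl, (mem_range.mp (hI hi)).le]

variable {V β : Type*}

def monoNbhd [DecidableEq V] [DecidableEq β] (c : V → V → β) (S : Finset V) (v : V) (d : β) :
    Finset V :=
  S.filter fun x => x ≠ v ∧ c v x = d

theorem IsGallai.subset_monoNbhd_union [DecidableEq V] [DecidableEq β] {c : V → V → β}
    (hc : IsGallai c) (S : Finset V) {u w : V} (huw : u ≠ w) :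
    S ⊆ monoNbhd c S u (c u w) ∪ monoNbhd c S w (c u w) ∪
      S.filter fun x => c u x ≠ c u w ∧ c w x = c u x := by
  intro x hx
  simp only [monoNbhd, mem_union, mem_filter]
  by_cases hxu : x = u
  · subst hxu
    exact Or.inl (Or.inr ⟨hx, huw, hc.1 w x⟩)
  by_cases hxw : x = w
  · subst hxw
    exact Or.inl (Or.inl ⟨hx, Ne.symm huw, rfl⟩)
  have hnot_rainbow := hc.2 u w x huw (Ne.symm hxu) (Ne.symm hxw)
  by_cases h1 : c u x = c u w
  · exact Or.inl (Or.inl ⟨hx, hxu, h1⟩)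
  by_cases h2 : c w x = c u w
  · exact Or.inl (Or.inr ⟨hx, hxw, h2⟩)
  exact Or.inr ⟨hx, h1, by tauto⟩

theorem IsGallai.exists_card_le_three_mul_card_monoNbhd [DecidableEq V] [DecidableEq β]
    {c : V → V → β} (hc : IsGallai c) {S : Finset V} (hS : 2 ≤ #S) :
    ∃ v ∈ S, ∃ d, #S ≤ 3 * #(monoNbhd c S v d) := by
  by_contra! hsmall
  obtain ⟨u, hu⟩ : S.Nonempty := card_pos.mp (by omega)
  let r : V → V → Prop := fun w x => c u x ≠ c u w ∧ c w x = c u x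
  have hAbove : ∀ w ∈ S.erase u, ((#S + 2 : ℕ) / 3 : ℚ) ≤ #(S.bipartiteAbove r w) := by
    intro w hw
    have hcover : #S ≤ #(monoNbhd c S u (c u w)) + #(monoNbhd c S w (c u w)) +
        #(S.bipartiteAbove r w) :=
      (card_le_card (hc.subset_monoNbhd_union S (ne_of_mem_erase hw).symm)).trans <|
        (card_union_le _ _).trans (Nat.add_le_add_right (card_union_le _ _) _)
    have hu' := hsmall u hu (c u w)
    have hw' := hsmall w (mem_of_mem_erase hw) (c u w)
    rw [div_le_iff₀ (by norm_num)]
    exact_mod_cast (show #S + 2 ≤ #(S.bipartiteAbove r w) * 3 by omega)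
  have hBelow :
      ∀ x ∈ S, (#((S.erase u).bipartiteBelow r x) : ℚ) ≤ ((#S - 1 : ℕ) / 3 : ℚ) := by
    intro x hx
    have hsub : (S.erase u).bipartiteBelow r x ⊆ monoNbhd c S x (c x u) := by
      intro w hw
      obtain ⟨hw, hne, heq⟩ := (mem_bipartiteBelow r).mp hw
      refine mem_filter.mpr ⟨mem_of_mem_erase hw, fun h => hne (h ▸ rfl), ?_⟩
      rw [hc.1, heq, hc.1]
    have hx' := hsmall x hx (c x u)
    have hle := card_le_card hsub
    rw [le_div_iff₀ (by norm_num)]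
    exact_mod_cast (show _ * 3 ≤ #S - 1 by omega)
  have hcount := card_nsmul_le_card_nsmul r hAbove hBelow
  rw [card_erase_of_mem hu, nsmul_eq_mul, nsmul_eq_mul] at hcount
  have h2 : (2 : ℚ) ≤ #S := by exact_mod_cast hS
  push_cast [Nat.cast_sub (by omega : 1 ≤ #S)] at hcount
  nlinarith

def IsMonoChain (c : V → V → β) (v : ℕ → V) (m : ℕ) : Prop :=
  ∀ i j, i < j → j ≤ m → v i ≠ v j ∧ c (v i) (v j) = c (v i) (v (i + 1))

theorem IsGallai.exists_isMonoChain [DecidableEq V] [DecidableEq β] {c : V → V → β}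
    (hc : IsGallai c) (m : ℕ) (S : Finset V) (hS : 2 * 3 ^ m ≤ 3 * #S) :
    ∃ v : ℕ → V, (∀ i ≤ m, v i ∈ S) ∧ IsMonoChain c v m := by
  induction m generalizing S with
  | zero =>
    obtain ⟨x, hx⟩ : S.Nonempty := card_pos.mp (by omega)
    exact ⟨fun _ => x, fun _ _ => hx, fun i j hij hj => by omega⟩
  | succ m ih =>
    have h3m : 0 < 3 ^ m := by positivity
    rw [pow_succ] at hS
    obtain ⟨x, hx, d, hd⟩ := hc.exists_card_le_three_mul_card_monoNbhd (S := S) (by omega)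
    obtain ⟨w, hwN, hw⟩ := ih (monoNbhd c S x d) (by omega)
    have hxw : ∀ i ≤ m, x ≠ w i ∧ c x (w i) = d := fun i hi =>
      have h := (mem_filter.mp (hwN i hi)).2
      ⟨h.1.symm, h.2⟩
    refine ⟨fun | 0 => x | i + 1 => w i, ?_, ?_⟩
    · rintro (_ | i) hi
      exacts [hx, (filter_subset _ _) (hwN i (by omega))]
    · rintro (_ | i) (_ | j) hij hj
      · omega
      · exact ⟨(hxw j (by omega)).1, (hxw j (by omega)).2.trans (hxw 0 (by omega)).2.symm⟩
      · omega
      · exact hw i j (by omega) (by omega)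

theorem IsMonoChain.card_image_insert [DecidableEq V] {c : V → V → β} {v : ℕ → V} {m : ℕ}
    (hv : IsMonoChain c v m) {I : Finset ℕ} (hI : I ⊆ range m) :
    #((insert m I).image v) = #I + 1 := by
  rw [card_image_of_injOn, card_insert_of_notMem fun h => by simpa using hI h]
  intro i hi j hj hij
  by_contra hne
  rcases Nat.lt_or_gt_of_ne hne with h | h
  exacts [(hv i j h (le_of_mem_insert_of_subset_range hI hj)).1 hij,
    (hv j i h (le_of_mem_insert_of_subset_range hI hi)).1 hij.symm]

theorem IsMonoChain.colorsOn_image_subset [DecidableEq V] [DecidableEq β] {c : V → V → β}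
    (hsym : ∀ a b, c a b = c b a) {v : ℕ → V} {m : ℕ} (hv : IsMonoChain c v m)
    {I : Finset ℕ} (hI : I ⊆ range m) {Q : Finset β}
    (hQ : ∀ i ∈ I, c (v i) (v (i + 1)) ∈ Q) :
    colorsOn c ((insert m I).image v) ⊆ Q := by
  have hle : ∀ i ∈ insert m I, i ≤ m := fun i hi => le_of_mem_insert_of_subset_range hI hi
  have hforward : ∀ i ∈ insert m I, ∀ j ∈ insert m I, i < j → c (v i) (v j) ∈ Q := by
    intro i hi j hj hij
    have hiI : i ∈ I := (mem_insert.mp hi).resolve_left (by have := hle j hj; omega)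
    rw [(hv i j hij (hle j hj)).2]
    exact hQ i hiI
  simp only [colorsOn, subset_iff, mem_image, mem_filter, mem_product, Prod.exists]
  rintro _ ⟨_, _, ⟨⟨⟨i, hi, rfl⟩, ⟨j, hj, rfl⟩⟩, hne⟩, rfl⟩
  rcases lt_trichotomy i j with h | rfl | h
  · exact hforward i hi j hj h
  · exact absurd rfl hne
  · exact hsym (v i) (v j) ▸ hforward j hj i hi h

theorem IsGallai.exists_card_eq_card_colorsOn_le [Fintype V] [DecidableEq V] [Fintype β]
    [DecidableEq β] {c : V → V → β} (hc : IsGallai c) {q r m : ℕ}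
    (hq : q ≤ Fintype.card β) (hm : Fintype.card β * r < q * m)
    (hV : 2 * 3 ^ m ≤ 3 * Fintype.card V) :
    ∃ S : Finset V, #S = r + 2 ∧ #(colorsOn c S) ≤ q := by
  obtain ⟨v, -, hv⟩ := hc.exists_isMonoChain m univ hV
  obtain ⟨Q, hQ, hQm⟩ := exists_card_eq_mul_card_le_card_filter_mem
    (fun i => c (v i) (v (i + 1))) (range m) hq
  rw [card_range] at hQm
  obtain ⟨I, hIQ, hI⟩ := exists_subset_card_eq
    (s := (range m).filter fun i => c (v i) (v (i + 1)) ∈ Q) (n := r + 1)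
    (Nat.lt_of_mul_lt_mul_left (hm.trans_le hQm))
  have hIm : I ⊆ range m := hIQ.trans (filter_subset _ _)
  refine ⟨(insert m I).image v, ?_, ?_⟩
  · rw [hv.card_image_insert hIm, hI]
  · exact hQ ▸ card_le_card
      (hv.colorsOn_image_subset hc.1 hIm fun i hi => (mem_filter.mp (hIQ hi)).2)

theorem gallaiNum_le_two_mul_three_pow {p q k : ℕ} (hp : 2 ≤ p) (hq : 0 < q) (hk : q ≤ k) :
    gallaiNum k q p ≤ 2 * 3 ^ (k * (p - 2) / q) := by
  refine Nat.sInf_le ⟨by positivity, fun c hc => ?_⟩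
  obtain ⟨S, hS, hSq⟩ := hc.exists_card_eq_card_colorsOn_le (q := q) (r := p - 2)
    (m := k * (p - 2) / q + 1) (by simpa using hk)
    (by simpa using Nat.lt_mul_div_succ (k * (p - 2)) hq) (by simp [pow_succ]; omega)
  exact ⟨S, by omega, hSq⟩

theorem gallaiNum_le_two_rpow_general (p q k : ℕ) (hp : 3 ≤ p) (hq1 : 1 ≤ q) (hk : q ≤ k) :
    (gallaiNum k q p : ℝ) ≤ 2 ^ (2 * (k : ℝ) * ((p : ℝ) - 2) / (q : ℝ) + 1) := by
  set a := k * (p - 2) / q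
  have ha : (a : ℝ) ≤ k * ((p : ℝ) - 2) / q := by
    have := Nat.cast_div_le (α := ℝ) (m := k * (p - 2)) (n := q)
    rwa [Nat.cast_mul, Nat.cast_sub (by omega), Nat.cast_ofNat] at this
  calc (gallaiNum k q p : ℝ) ≤ ((2 * 3 ^ a : ℕ) : ℝ) := by
        exact_mod_cast gallaiNum_le_two_mul_three_pow (by omega) hq1 hk
    _ ≤ ((2 ^ (2 * a + 1) : ℕ) : ℝ) := by
        rw [pow_succ', pow_mul]
        exact_mod_cast Nat.mul_le_mul_left 2 (Nat.pow_le_pow_left (by norm_num) a)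
    _ = (2 : ℝ) ^ ((2 * a + 1 : ℕ) : ℝ) := by rw [Real.rpow_natCast]; push_cast; rfl
    _ ≤ 2 ^ (2 * (k : ℝ) * ((p : ℝ) - 2) / (q : ℝ) + 1) := by
        gcongr
        · norm_num
        · push_cast
          rw [mul_assoc, mul_div_assoc]
          linarith

theorem gallaiNum_le_two_rpow (p q k : ℕ) (hp : 3 ≤ p) (hq1 : 1 ≤ q) (hq2 : q ≤ p - 2)
    (hk : q ≤ k) :
    (gallaiNum k q p : ℝ) ≤ 2 ^ (2 * (k : ℝ) * ((p : ℝ) - 2) / (q : ℝ) + 1) :=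
  gallaiNum_le_two_rpow_general p q k hp hq1 hk
end

section
/- For all integers k ≥ 3 and p ≥ 5, we have g^k_1(p) < 2^{2k(p−2)−3}; that is, every Gallai-k-coloring of the complete graph on 2^{2k(p−2)−3} vertices contains a monochromatic copy of K_p. -/
open Finset

/-! A Gallai colouring of a vertex set `S` with `#S ≥ 2` has a monochromatic star of size at
least `(#S + 1) / 3`. Otherwise fix `u ∈ S`: for `x, w ≠ u` with `c u x ≠ c u w` the triangle
`u x w` forces `c x w ∈ {c u x, c u w}`, and double counting these pairs against the small
monochromatic neighbourhoods of `u`, `x` and `w` gives a contradiction.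

Passing repeatedly to the largest monochromatic neighbourhood, as in the Erdős–Szekeres bound
for Ramsey numbers, lowers the exponent in `3 ^ (∑ q - 2k + 1) < 2 #S` by one while the target
clique size of one colour drops by one. This gives a monochromatic `K_p` once
`2n > 3 ^ (k (p - 2) + 1)`, and `3 ^ (k (p - 2) + 1) + 2 < 2 ^ (2k (p - 2) - 2)` as soon as
`k (p - 2) ≥ 9`. -/

section

variable {V β : Type*} [DecidableEq V] [DecidableEq β] {c : V → V → β}

def colorNeighbors (c : V → V → β) (S : Finset V) (v : V) (i : β) : Finset V :=
  (S.erase v).filter (c v · = i)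

@[simp]
theorem mem_colorNeighbors {S : Finset V} {v w : V} {i : β} :
    w ∈ colorNeighbors c S v i ↔ w ≠ v ∧ w ∈ S ∧ c v w = i := by
  simp [colorNeighbors, and_assoc]

theorem colorNeighbors_subset (S : Finset V) (v : V) (i : β) :
    colorNeighbors c S v i ⊆ S :=
  (filter_subset _ _).trans (erase_subset _ _)

theorem notMem_colorNeighbors_self (S : Finset V) (v : V) (i : β) :
    v ∉ colorNeighbors c S v i := by
  simp

-- The extra vertex is `u` itself.
theorem card_add_one_le_card_colorNeighbors (hsymm : ∀ a b, c a b = c b a) {S W : Finset V}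
    {u x : V} (hu : u ∈ S) (hxu : x ≠ u) (hW : W ⊆ (S.erase u).erase x)
    (hWc : ∀ w ∈ W, c x w = c u x) : #W + 1 ≤ #(colorNeighbors c S x (c u x)) := by
  have huW : u ∉ W := fun h => by simpa using hW h
  rw [← card_insert_of_notMem huW]
  refine card_le_card (insert_subset_iff.mpr ⟨?_, fun w hw => ?_⟩)
  · simpa [hsymm x u, hu] using hxu.symm
  · obtain ⟨hwx, -, hwS⟩ : w ≠ x ∧ w ≠ u ∧ w ∈ S := by simpa [and_assoc] using hW hw
    simp [hwx, hwS, hWc w hw]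

theorem pairwise_insert_of_subset_colorNeighbors (hsymm : ∀ a b, c a b = c b a)
    {S C : Finset V} {v : V} {i : β} (hCS : C ⊆ colorNeighbors c S v i)
    (hC : (C : Set V).Pairwise (c · · = i)) :
    (↑(insert v C) : Set V).Pairwise (c · · = i) := by
  rw [coe_insert]
  refine hC.insert fun w hw _ => ?_
  have hvw := (mem_colorNeighbors.mp (hCS hw)).2.2
  exact ⟨hvw, hsymm w v ▸ hvw⟩

theorem IsGallai.exists_le_three_mul_card_colorNeighbors (hc : IsGallai c) {S : Finset V}
    (hS : 2 ≤ #S) : ∃ v ∈ S, ∃ i, #S + 1 ≤ 3 * #(colorNeighbors c S v i) := by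
  by_contra! hsmall
  obtain ⟨u, hu⟩ : S.Nonempty := card_pos.mp (by omega)
  set E := S.erase u
  have he : #E + 1 = #S := card_erase_add_one hu
  let A : V → Finset V := fun x => E.filter fun w => c u w ≠ c u x ∧ c x w = c u x
  let B : V → Finset V := fun x => E.filter fun w => c u w ≠ c u x ∧ c x w = c u w
  have hrow : ∀ x ∈ E, 2 * #E ≤ 3 * (#(A x) + #(B x)) + 1 := by
    intro x hx
    have hsplit := card_filter_add_card_filter_not (s := E) (c u · = c u x)
    have hcover : E.filter (fun w => ¬c u w = c u x) ⊆ A x ∪ B x := by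
      intro w hw
      obtain ⟨hwE, hne⟩ := mem_filter.mp hw
      have hxw : x ≠ w := by rintro rfl; exact hne rfl
      have hrainbow := hc.2 u x w (mem_erase.mp hx).1.symm (mem_erase.mp hwE).1.symm hxw
      by_cases h : c x w = c u x
      · exact mem_union_left _ (mem_filter.mpr ⟨hwE, hne, h⟩)
      · exact mem_union_right _ (mem_filter.mpr ⟨hwE, hne, by tauto⟩)
    have hnbhd : 3 * #(E.filter (c u · = c u x)) < #S + 1 := hsmall u hu (c u x)
    have := (card_le_card hcover).trans (card_union_le _ _)
    omega
  have hA : ∀ x ∈ E, 3 * #(A x) + 2 ≤ #E := by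
    intro x hx
    have hAx : A x ⊆ E.erase x := fun w hw => by
      obtain ⟨hwE, hne, -⟩ := mem_filter.mp hw
      exact mem_erase.mpr ⟨by rintro rfl; exact hne rfl, hwE⟩
    have := card_add_one_le_card_colorNeighbors hc.1 hu (mem_erase.mp hx).1 hAx
      fun w hw => (mem_filter.mp hw).2.2
    have := hsmall x (mem_erase.mp hx).2 (c u x)
    omega
  -- `w ∈ B x` says exactly `x ∈ A w`.
  have hAB : ∑ x ∈ E, #(B x) = ∑ x ∈ E, #(A x) := by
    refine (sum_card_bipartiteAbove_eq_sum_card_bipartiteBelow _).trans (sum_congr rfl ?_)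
    intro w _
    refine congrArg card (filter_congr fun x _ => ?_)
    dsimp only
    rw [ne_comm, hc.1 x w]
  have hrows := sum_le_sum hrow
  have hAs := sum_le_sum hA
  simp only [sum_const, smul_eq_mul, sum_add_distrib, ← mul_sum, hAB] at hrows hAs
  linarith

theorem IsGallai.exists_pairwise_of_three_pow_lt [Fintype β] (hc : IsGallai c) (q : β → ℕ)
    (S : Finset V) (hS : 3 ^ (∑ i, q i + 1 - 2 * Fintype.card β) < 2 * #S) :
    ∃ i, ∃ C ⊆ S, #C = q i ∧ (C : Set V).Pairwise (c · · = i) := by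
  induction hn : ∑ i, q i using Nat.strong_induction_on generalizing q S with
  | _ n ih =>
  have h3pow := Nat.one_le_pow (∑ i, q i + 1 - 2 * Fintype.card β) 3 (by norm_num)
  by_cases hsmall : ∃ i, q i ≤ 1
  · obtain ⟨i, hi⟩ := hsmall
    obtain ⟨v, hv⟩ : S.Nonempty := card_pos.mp (by omega)
    obtain hi | hi : q i = 0 ∨ q i = 1 := by omega
    · exact ⟨i, ∅, empty_subset _, hi.symm, by simp⟩
    · exact ⟨i, {v}, singleton_subset_iff.mpr hv, hi.symm, by simp⟩
  push Not at hsmall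
  have hsum : 2 * Fintype.card β ≤ ∑ i, q i := by
    simpa [mul_comm] using sum_le_sum fun i (_ : i ∈ univ) => Nat.succ_le_of_lt (hsmall i)
  have hS2 : 2 ≤ #S := by
    have := Nat.le_self_pow (show ∑ i, q i + 1 - 2 * Fintype.card β ≠ 0 by omega) 3
    omega
  obtain ⟨v, hv, i, hT⟩ := hc.exists_le_three_mul_card_colorNeighbors hS2
  set q' := Function.update q i (q i - 1)
  have hsum' : ∑ j, q' j + 1 = ∑ j, q j := by
    rw [sum_update_of_mem (mem_univ i), sum_eq_add_sum_sdiff_singleton_of_mem (mem_univ i) q]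
    have := hsmall i
    omega
  have hT' : 3 ^ (∑ j, q' j + 1 - 2 * Fintype.card β) < 2 * #(colorNeighbors c S v i) := by
    have hpow : 3 ^ (∑ j, q j + 1 - 2 * Fintype.card β) =
        3 * 3 ^ (∑ j, q' j + 1 - 2 * Fintype.card β) := by
      rw [← pow_succ']
      congr 1
      omega
    omega
  obtain ⟨j, C, hCT, hCcard, hC⟩ := ih (n - 1) (by omega) q' _ hT' (by omega)
  by_cases hji : j = i
  · subst hji
    have hvC : v ∉ C := fun h => notMem_colorNeighbors_self S v j (hCT h)
    refine ⟨j, insert v C, insert_subset hv (hCT.trans (colorNeighbors_subset S v j)), ?_, ?_⟩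
    · rw [card_insert_of_notMem hvC, hCcard]
      simp only [q', Function.update_self]
      have := hsmall j
      omega
    · exact pairwise_insert_of_subset_colorNeighbors hc.1 hCT hC
  · exact ⟨j, C, hCT.trans (colorNeighbors_subset S v i), by simpa [q', hji] using hCcard, hC⟩

theorem card_colorsOn_le_one_of_pairwise {C : Finset V} {i : β}
    (hC : (C : Set V).Pairwise (c · · = i)) : #(colorsOn c C) ≤ 1 := by
  refine (card_le_card fun b hb => ?_).trans (card_singleton i).le
  obtain ⟨⟨x, y⟩, hxy, rfl⟩ := mem_image.mp hb
  simp only [mem_filter, mem_product] at hxy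
  exact mem_singleton.mpr (hC hxy.1.1 hxy.1.2 hxy.2)

end

theorem IsGallai.exists_card_eq_card_colorsOn_le_one {V : Type*} [DecidableEq V] [Fintype V]
    {k p : ℕ} {c : V → V → Fin k} (hc : IsGallai c)
    (hV : 3 ^ (k * (p - 2) + 1) < 2 * Fintype.card V) :
    ∃ S : Finset V, #S = p ∧ #(colorsOn c S) ≤ 1 := by
  have hexp : ∑ _i : Fin k, p + 1 - 2 * Fintype.card (Fin k) ≤ k * (p - 2) + 1 := by
    simp [Nat.mul_sub, mul_comm 2 k]
    omega
  obtain ⟨i, C, -, hCcard, hC⟩ := hc.exists_pairwise_of_three_pow_lt (fun _ => p) univ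
    ((Nat.pow_le_pow_right (by norm_num) hexp).trans_lt hV)
  exact ⟨C, hCcard, card_colorsOn_le_one_of_pairwise hC⟩

theorem gallaiNum_le {k q p n : ℕ} (hn : 0 < n)
    (h : ∀ c : Fin n → Fin n → Fin k, IsGallai c →
      ∃ S : Finset (Fin n), #S = p ∧ #(colorsOn c S) ≤ q) :
    gallaiNum k q p ≤ n :=
  Nat.sInf_le ⟨hn, h⟩

theorem three_pow_succ_add_two_lt_two_pow {m : ℕ} (hm : 9 ≤ m) :
    3 ^ (m + 1) + 2 < 2 ^ (2 * m - 2) := by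
  induction m, hm using Nat.le_induction with
  | base => norm_num
  | succ m hm ih =>
    rw [show 2 * (m + 1) - 2 = 2 * m - 2 + 1 + 1 by omega, pow_succ 3, pow_succ, pow_succ]
    omega

theorem gallaiNum_one_lt (k p : ℕ) (hk : 3 ≤ k) (hp : 5 ≤ p) :
    gallaiNum k 1 p < 2 ^ (2 * k * (p - 2) - 3) ∧
    ∀ c : Fin (2 ^ (2 * k * (p - 2) - 3)) → Fin (2 ^ (2 * k * (p - 2) - 3)) → Fin k,
      IsGallai c →
        ∃ S : Finset (Fin (2 ^ (2 * k * (p - 2) - 3))),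
          S.card = p ∧ (colorsOn c S).card ≤ 1 := by
  have hm : 9 ≤ k * (p - 2) := Nat.mul_le_mul hk (by omega : 3 ≤ p - 2)
  have hN : 3 ^ (k * (p - 2) + 1) + 2 < 2 * 2 ^ (2 * k * (p - 2) - 3) := by
    rw [← pow_succ', mul_assoc, show 2 * (k * (p - 2)) - 3 + 1 = 2 * (k * (p - 2)) - 2 by omega]
    exact three_pow_succ_add_two_lt_two_pow hm
  have hmono : ∀ n, 3 ^ (k * (p - 2) + 1) < 2 * n →
      ∀ c : Fin n → Fin n → Fin k, IsGallai c →
        ∃ S : Finset (Fin n), #S = p ∧ #(colorsOn c S) ≤ 1 :=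
    fun n hn _ hc => hc.exists_card_eq_card_colorsOn_le_one (by simpa using hn)
  generalize 2 ^ (2 * k * (p - 2) - 3) = N at hN ⊢
  generalize 3 ^ (k * (p - 2) + 1) = T at hN hmono
  exact ⟨(gallaiNum_le (n := N - 1) (by omega) (hmono _ (by omega))).trans_lt (by omega),
    hmono N (by omega)⟩
end

section
/- For all integers p ≥ 4 and k ≥ p−2, we have g^k_{p−2}(p) = k+2; that is, every Gallai-k-coloring of K_{k+2} contains a set of p vertices spanning edges in at most p−2 colors, and there exists a Gallai-k-coloring of K_{k+1} in which every set of p vertices spans edges in at least p−1 colors. -/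
open Finset

/-!
Deleting a vertex `v` from a Gallai coloring loses at most one color, since two colors seen
only at `v` would span a rainbow triangle with `v`; hence `K_m` carries at most `m - 1` colors.

For the upper bound we delete vertices one at a time, keeping at most `m - 2` colors on `m`
vertices. This is possible while `m ≥ 5`: otherwise no deletion loses a color, so every proper
subset `T` spans exactly `|T| - 1` colors. Then no triangle is monochromatic, so every color
class contains two disjoint edges, and these are joined by an edge of the same color (otherwise
Gallai forces the four cross edges to share one color, and the four vertices span only two
colors). Consequently at most three pairs `{u, v}` meet every edge of a given color. But every
pair meets every edge of some color (deleting it kills a color), so `m(m-1)/2 ≤ 3(m-2)`, which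
fails for `m ≥ 5`.

The lower bound is the coloring `c(i, j) = min(i, j)` of `K_{k+1}`.
-/

section Basic

variable {V β : Type*} [DecidableEq V] [DecidableEq β] {c : V → V → β} {S T : Finset V} {γ : β}

theorem mem_colorsOn : γ ∈ colorsOn c S ↔ ∃ a ∈ S, ∃ b ∈ S, a ≠ b ∧ c a b = γ := by
  simp [colorsOn, and_assoc]

theorem colorsOn_mono (h : S ⊆ T) : colorsOn c S ⊆ colorsOn c T := by
  unfold colorsOn
  gcongr

theorem colorsOn_subset {X : Finset β} (h : ∀ a ∈ S, ∀ b ∈ S, a ≠ b → c a b ∈ X) :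
    colorsOn c S ⊆ X := by
  intro γ hγ
  obtain ⟨a, ha, b, hb, hab, rfl⟩ := mem_colorsOn.1 hγ
  exact h a ha b hb hab

theorem colorsOn_singleton (v : V) : colorsOn c {v} = ∅ :=
  subset_empty.1 <| colorsOn_subset <| by simp

omit [DecidableEq V] in
theorem IsGallai.eq_of_ne_of_ne (hc : IsGallai c) {a b d : V} (hab : a ≠ b) (had : a ≠ d)
    (hbd : b ≠ d) (h₁ : c a b ≠ c a d) (h₂ : c a b ≠ c b d) : c a d = c b d := by
  by_contra h
  exact hc.2 a b d hab had hbd ⟨h₁, h₂, h⟩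

theorem card_colorsOn_le_erase_add_one (hc : IsGallai c) (S : Finset V) (v : V) :
    #(colorsOn c S) ≤ #(colorsOn c (S.erase v)) + 1 := by
  have private_color : ∀ γ ∈ colorsOn c S \ colorsOn c (S.erase v),
      ∃ x ∈ S.erase v, c v x = γ ∧ c v x ∉ colorsOn c (S.erase v) := by
    intro γ hγ
    obtain ⟨hγS, hγv⟩ := mem_sdiff.1 hγ
    obtain ⟨a, ha, b, hb, hab, rfl⟩ := mem_colorsOn.1 hγS
    by_cases hav : a = v
    · subst hav
      exact ⟨b, mem_erase.2 ⟨Ne.symm hab, hb⟩, rfl, hγv⟩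
    by_cases hbv : b = v
    · subst hbv
      exact ⟨a, mem_erase.2 ⟨hav, ha⟩, hc.1 _ _, hc.1 b a ▸ hγv⟩
    · exact absurd (mem_colorsOn.2
        ⟨a, mem_erase.2 ⟨hav, ha⟩, b, mem_erase.2 ⟨hbv, hb⟩, hab, rfl⟩) hγv
  have : #(colorsOn c S \ colorsOn c (S.erase v)) ≤ 1 := by
    refine card_le_one.2 fun γ hγ δ hδ => ?_
    obtain ⟨x, hx, rfl, hx_new⟩ := private_color γ hγ
    obtain ⟨y, hy, rfl, hy_new⟩ := private_color δ hδ
    by_contra hne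
    have hxy : x ≠ y := fun h => hne (h ▸ rfl)
    have hxy_old : c x y ∈ colorsOn c (S.erase v) := mem_colorsOn.2 ⟨x, hx, y, hy, hxy, rfl⟩
    exact hc.2 v x y (mem_erase.1 hx).1.symm (mem_erase.1 hy).1.symm hxy
      ⟨hne, fun h => hx_new (h ▸ hxy_old), fun h => hy_new (h ▸ hxy_old)⟩
  have := card_le_card_sdiff_add_card (s := colorsOn c S) (t := colorsOn c (S.erase v))
  omega

theorem card_colorsOn_le_add_card_sub (hc : IsGallai c) (hTS : T ⊆ S) :
    #(colorsOn c S) ≤ #(colorsOn c T) + (#S - #T) := by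
  induction S using Finset.strongInduction with
  | H S ih =>
    obtain rfl | hT := hTS.eq_or_ssubset
    · simp
    obtain ⟨v, hvS, hvT⟩ := exists_of_ssubset hT
    have hTv : T ⊆ S.erase v := fun x hx => mem_erase.2 ⟨fun h => hvT (h ▸ hx), hTS hx⟩
    have h₁ := ih _ (erase_ssubset hvS) hTv
    have h₂ := card_colorsOn_le_erase_add_one hc S v
    have h₃ := card_erase_of_mem hvS
    have h₄ := card_le_card hTv
    have h₅ := card_pos.2 ⟨v, hvS⟩
    omega

theorem card_colorsOn_le_card_sub_one (hc : IsGallai c) (S : Finset V) :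
    #(colorsOn c S) ≤ #S - 1 := by
  obtain rfl | ⟨v, hv⟩ := S.eq_empty_or_nonempty
  · simp [colorsOn]
  · simpa [colorsOn_singleton] using card_colorsOn_le_add_card_sub hc (singleton_subset_iff.2 hv)

end Basic

section ColorCovers

def IsColoredEdge {V β : Type*} (c : V → V → β) (S : Finset V) (γ : β) (a b : V) : Prop :=
  a ∈ S ∧ b ∈ S ∧ a ≠ b ∧ c a b = γ

def CoversColor {V β : Type*} (c : V → V → β) (S : Finset V) (γ : β) (u v : V) : Prop :=
  ∀ a b, IsColoredEdge c S γ a b → a = u ∨ a = v ∨ b = u ∨ b = v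

open scoped Classical in
noncomputable def colorCovers {V β : Type*} [DecidableEq V] (c : V → V → β) (S : Finset V)
    (γ : β) : Finset (V × V) :=
  S.offDiag.filter fun q => CoversColor c S γ q.1 q.2

variable {V β : Type*} [DecidableEq V] {c : V → V → β} {S : Finset V} {γ : β}

theorem mem_colorCovers {q : V × V} :
    q ∈ colorCovers c S γ ↔ q ∈ S.offDiag ∧ CoversColor c S γ q.1 q.2 := by
  simp [colorCovers]

omit [DecidableEq V] in
theorem IsColoredEdge.symm (hc : IsGallai c) {a b : V} (h : IsColoredEdge c S γ a b) :
    IsColoredEdge c S γ b a :=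
  ⟨h.2.1, h.1, h.2.2.1.symm, (hc.1 b a).trans h.2.2.2⟩

theorem exists_isColoredEdge_iff [DecidableEq β] :
    (∃ a b, IsColoredEdge c S γ a b) ↔ γ ∈ colorsOn c S := by
  simp [mem_colorsOn, IsColoredEdge]

theorem card_colorCovers_le_six {a b d e : V} (hab : IsColoredEdge c S γ a b)
    (hde : IsColoredEdge c S γ d e) (had : IsColoredEdge c S γ a d)
    (hae : a ≠ e) (hbd : b ≠ d) (hbe : b ≠ e) :
    #(colorCovers c S γ) ≤ 6 := by
  have hsub : colorCovers c S γ ⊆ {(a, d), (d, a), (a, e), (e, a), (b, d), (d, b)} := by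
    rintro ⟨u, v⟩ huv
    have hcov := (mem_colorCovers.1 huv).2
    have h₁ := hcov a b hab
    have h₂ := hcov d e hde
    have h₃ := hcov a d had
    have := hab.2.2.1
    have := hde.2.2.1
    have := had.2.2.1
    simp only [mem_insert, mem_singleton, Prod.mk.injEq]
    rcases h₁ with rfl | rfl | rfl | rfl <;> rcases h₂ with rfl | rfl | rfl | rfl <;> simp_all
  exact (card_le_card hsub).trans card_le_six

end ColorCovers

section NonCritical

variable {V β : Type*} [DecidableEq V] [DecidableEq β] {c : V → V → β} {S T : Finset V} {γ : β}

theorem card_sub_one_le_card_colorsOn (hc : IsGallai c)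
    (herase : ∀ v ∈ S, colorsOn c (S.erase v) = colorsOn c S)
    (hcard : #S - 2 ≤ #(colorsOn c S))
    (hTS : T ⊆ S) (hlt : #T < #S) : #T - 1 ≤ #(colorsOn c T) := by
  obtain ⟨v, hvS, hvT⟩ := exists_mem_notMem_of_card_lt_card hlt
  have hTv : T ⊆ S.erase v := fun x hx => mem_erase.2 ⟨fun h => hvT (h ▸ hx), hTS hx⟩
  have h₁ := card_colorsOn_le_add_card_sub hc hTv
  rw [herase v hvS, card_erase_of_mem hvS] at h₁
  omega

theorem not_isColoredEdge_triangle (hc : IsGallai c)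
    (herase : ∀ v ∈ S, colorsOn c (S.erase v) = colorsOn c S)
    (hcard : #S - 2 ≤ #(colorsOn c S))
    (h4 : 4 ≤ #S) {a b d : V} (hab : IsColoredEdge c S γ a b) (hbd : IsColoredEdge c S γ b d)
    (had : IsColoredEdge c S γ a d) : False := by
  have hsub : colorsOn c {a, b, d} ⊆ {γ} := colorsOn_subset <| by
    have := hab.symm hc
    have := hbd.symm hc
    have := had.symm hc
    simp only [mem_insert, mem_singleton]
    rintro x (rfl | rfl | rfl) y (rfl | rfl | rfl) hxy <;> simp_all [IsColoredEdge]
  have hT : ({a, b, d} : Finset V) ⊆ S := by simp [insert_subset_iff, hab.1, hab.2.1, hbd.2.1]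
  have h₃ : #({a, b, d} : Finset V) = 3 := by
    rw [card_insert_of_notMem, card_pair hbd.2.2.1]
    simp [hab.2.2.1, had.2.2.1]
  have := card_sub_one_le_card_colorsOn hc herase hcard hT (by omega)
  have := (card_le_card hsub).trans (card_singleton γ).le
  omega

theorem exists_cross_edge (hc : IsGallai c)
    (herase : ∀ v ∈ S, colorsOn c (S.erase v) = colorsOn c S)
    (hcard : #S - 2 ≤ #(colorsOn c S))
    (h5 : 5 ≤ #S) {a b d e : V} (hab : IsColoredEdge c S γ a b) (hde : IsColoredEdge c S γ d e)
    (had : a ≠ d) (hae : a ≠ e) (hbd : b ≠ d) (hbe : b ≠ e) :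
    c a d = γ ∨ c a e = γ ∨ c b d = γ ∨ c b e = γ := by
  by_contra! hcross
  obtain ⟨h_ad, h_ae, h_bd, h_be⟩ := hcross
  obtain ⟨haS, hbS, hab', h_ab⟩ := hab
  obtain ⟨hdS, heS, hde', h_de⟩ := hde
  have h₁ : c a d = c b d := hc.eq_of_ne_of_ne hab' had hbd (h_ab ▸ h_ad.symm) (h_ab ▸ h_bd.symm)
  have h₂ : c a e = c b e := hc.eq_of_ne_of_ne hab' hae hbe (h_ab ▸ h_ae.symm) (h_ab ▸ h_be.symm)
  have h₃ : c d a = c e a := hc.eq_of_ne_of_ne hde' had.symm hae.symm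
    (by rw [h_de, hc.1]; exact h_ad.symm) (by rw [h_de, hc.1]; exact h_ae.symm)
  have hsub : colorsOn c {a, b, d, e} ⊆ {γ, c a d} := colorsOn_subset <| by
    have := hc.1 b a
    have := hc.1 e d
    have := hc.1 d a
    have := hc.1 e a
    have := hc.1 d b
    have := hc.1 e b
    simp only [mem_insert, mem_singleton]
    rintro x (rfl | rfl | rfl | rfl) y (rfl | rfl | rfl | rfl) hxy <;> simp_all
  have hT : ({a, b, d, e} : Finset V) ⊆ S := by simp [insert_subset_iff, *]
  have h₄ : #({a, b, d, e} : Finset V) = 4 := by simp [*]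
  have := card_sub_one_le_card_colorsOn hc herase hcard hT (by omega)
  have := (card_le_card hsub).trans card_le_two
  omega

theorem exists_isColoredEdge_disjoint_or_from (hc : IsGallai c)
    (herase : ∀ v ∈ S, colorsOn c (S.erase v) = colorsOn c S) (hγ : γ ∈ colorsOn c S)
    {u : V} (hu : u ∈ S) (v : V) :
    (∃ p q, IsColoredEdge c S γ p q ∧ p ≠ u ∧ p ≠ v ∧ q ≠ u ∧ q ≠ v) ∨
      ∃ w, IsColoredEdge c S γ v w ∧ w ≠ u := by
  rw [← herase u hu, ← exists_isColoredEdge_iff] at hγ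
  obtain ⟨p, q, hpu, hqu, hpq, h_pq⟩ := hγ
  obtain ⟨hpu, hpS⟩ := mem_erase.1 hpu
  obtain ⟨hqu, hqS⟩ := mem_erase.1 hqu
  have hpq_edge : IsColoredEdge c S γ p q := ⟨hpS, hqS, hpq, h_pq⟩
  by_cases hpv : p = v
  · exact .inr ⟨q, hpv ▸ hpq_edge, hqu⟩
  by_cases hqv : q = v
  · exact .inr ⟨p, hqv ▸ hpq_edge.symm hc, hpu⟩
  exact .inl ⟨p, q, hpq_edge, hpu, hpv, hqu, hqv⟩

theorem exists_disjoint_isColoredEdge (hc : IsGallai c)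
    (herase : ∀ v ∈ S, colorsOn c (S.erase v) = colorsOn c S)
    (hcard : #S - 2 ≤ #(colorsOn c S))
    (h4 : 4 ≤ #S) (hγ : γ ∈ colorsOn c S) :
    ∃ a b d e, IsColoredEdge c S γ a b ∧ IsColoredEdge c S γ d e ∧
      a ≠ d ∧ a ≠ e ∧ b ≠ d ∧ b ≠ e := by
  obtain ⟨u, v, huv⟩ := exists_isColoredEdge_iff.2 hγ
  rcases exists_isColoredEdge_disjoint_or_from hc herase hγ huv.1 v with
    ⟨p, q, hpq, hpu, hpv, hqu, hqv⟩ | ⟨w, hvw, hwu⟩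
  · exact ⟨u, v, p, q, huv, hpq, hpu.symm, hqu.symm, hpv.symm, hqv.symm⟩
  rcases exists_isColoredEdge_disjoint_or_from hc herase hγ hvw.1 w with
    ⟨p, q, hpq, hpv, hpw, hqv, hqw⟩ | ⟨x, hwx, hxv⟩
  · exact ⟨v, w, p, q, hvw, hpq, hpv.symm, hqv.symm, hpw.symm, hqw.symm⟩
  obtain rfl | hxu := eq_or_ne x u
  · exact (not_isColoredEdge_triangle hc herase hcard h4 huv hvw (hwx.symm hc)).elim
  · exact ⟨u, v, w, x, huv, hwx, hwu.symm, hxu.symm, hvw.2.2.1, hxv.symm⟩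

theorem card_colorCovers_le_six_of_forall_erase (hc : IsGallai c)
    (herase : ∀ v ∈ S, colorsOn c (S.erase v) = colorsOn c S)
    (hcard : #S - 2 ≤ #(colorsOn c S))
    (h5 : 5 ≤ #S) (hγ : γ ∈ colorsOn c S) : #(colorCovers c S γ) ≤ 6 := by
  obtain ⟨a, b, d, e, hab, hde, had, hae, hbd, hbe⟩ :=
    exists_disjoint_isColoredEdge hc herase hcard (by omega) hγ
  rcases exists_cross_edge hc herase hcard h5 hab hde had hae hbd hbe with h | h | h | h
  · exact card_colorCovers_le_six hab hde ⟨hab.1, hde.1, had, h⟩ hae hbd hbe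
  · exact card_colorCovers_le_six hab (hde.symm hc) ⟨hab.1, hde.2.1, hae, h⟩ had hbe hbd
  · exact card_colorCovers_le_six (hab.symm hc) hde ⟨hab.2.1, hde.1, hbd, h⟩ hbe had hae
  · exact card_colorCovers_le_six (hab.symm hc) (hde.symm hc) ⟨hab.2.1, hde.2.1, hbe, h⟩
      hbd hae had

end NonCritical

section Deletion

variable {V β : Type*} [DecidableEq V] [DecidableEq β] {c : V → V → β} {S : Finset V}

theorem exists_mem_colorCovers (hc : IsGallai c) (hcard : #S - 2 ≤ #(colorsOn c S))
    (h3 : 3 ≤ #S) {u v : V} (hu : u ∈ S) (hv : v ∈ S) (huv : u ≠ v) :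
    ∃ γ ∈ colorsOn c S, (u, v) ∈ colorCovers c S γ := by
  have hR : #((S.erase u).erase v) = #S - 2 := by
    rw [card_erase_of_mem (mem_erase.2 ⟨huv.symm, hv⟩), card_erase_of_mem hu]
    omega
  have hlt : #(colorsOn c ((S.erase u).erase v)) < #(colorsOn c S) := by
    have := card_colorsOn_le_card_sub_one hc ((S.erase u).erase v)
    omega
  obtain ⟨γ, hγS, hγR⟩ := exists_mem_notMem_of_card_lt_card hlt
  refine ⟨γ, hγS, mem_colorCovers.2 ⟨mem_offDiag.2 ⟨hu, hv, huv⟩, fun a b hab => ?_⟩⟩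
  by_contra! h
  obtain ⟨hau, hav, hbu, hbv⟩ := h
  exact hγR (mem_colorsOn.2 ⟨a, by simp [*, hab.1], b, by simp [*, hab.2.1], hab.2.2⟩)

theorem exists_card_colorsOn_erase_le (hc : IsGallai c) (h5 : 5 ≤ #S)
    (hS : #(colorsOn c S) ≤ #S - 2) : ∃ v ∈ S, #(colorsOn c (S.erase v)) ≤ #S - 3 := by
  by_contra! hcrit
  have herase : ∀ v ∈ S, colorsOn c (S.erase v) = colorsOn c S := fun v hv =>
    eq_of_subset_of_card_le (colorsOn_mono (erase_subset v S)) (by have := hcrit v hv; omega)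
  obtain ⟨v, hv⟩ := card_pos.1 (by omega : 0 < #S)
  have hcard : #(colorsOn c S) = #S - 2 := by
    have := hcrit v hv
    have := card_le_card (colorsOn_mono (c := c) (erase_subset v S))
    omega
  have hcover : S.offDiag ⊆ (colorsOn c S).biUnion (colorCovers c S) := fun q hq => by
    obtain ⟨hq₁, hq₂, hq⟩ := mem_offDiag.1 hq
    obtain ⟨γ, hγ, hqγ⟩ := exists_mem_colorCovers hc hcard.ge (by omega) hq₁ hq₂ hq
    exact mem_biUnion.2 ⟨γ, hγ, hqγ⟩
  have : #S * #S - #S ≤ 6 * (#S - 2) := calc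
    #S * #S - #S = #S.offDiag := (offDiag_card S).symm
    _ ≤ #((colorsOn c S).biUnion (colorCovers c S)) := card_le_card hcover
    _ ≤ ∑ γ ∈ colorsOn c S, #(colorCovers c S γ) := card_biUnion_le
    _ ≤ #(colorsOn c S) • 6 := sum_le_card_nsmul _ _ _ fun γ hγ =>
      card_colorCovers_le_six_of_forall_erase hc herase hcard.ge h5 hγ
    _ = 6 * (#S - 2) := by rw [hcard, smul_eq_mul, mul_comm]
  obtain ⟨m, hm⟩ := Nat.exists_eq_add_of_le h5
  rw [hm] at this
  ring_nf at this
  omega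

theorem exists_subset_card_eq_card_colorsOn_le (hc : IsGallai c) {p : ℕ} (hp : 4 ≤ p)
    (S : Finset V) (hpS : p ≤ #S) (hS : #(colorsOn c S) ≤ #S - 2) :
    ∃ T ⊆ S, #T = p ∧ #(colorsOn c T) ≤ p - 2 := by
  induction S using Finset.strongInduction with
  | H S ih =>
    obtain hpS | hpS := hpS.eq_or_lt
    · exact ⟨S, subset_rfl, hpS.symm, hpS ▸ hS⟩
    obtain ⟨v, hv, hvS⟩ := exists_card_colorsOn_erase_le hc (by omega) hS
    obtain ⟨T, hT, hTS⟩ := ih _ (erase_ssubset hv) (by rw [card_erase_of_mem hv]; omega)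
      (by rw [card_erase_of_mem hv]; omega)
    exact ⟨T, hT.trans (erase_subset v S), hTS⟩

end Deletion

section MinColoring

/-- Reduced mod `k` only to land in `Fin k`: no edge of `K_m` with `m ≤ k + 1` is affected. -/
def minColoring (k m : ℕ) [NeZero k] (i j : Fin m) : Fin k :=
  Fin.ofNat k (min (i : ℕ) j)

variable {k m : ℕ} [NeZero k]

theorem isGallai_minColoring : IsGallai (minColoring k m) := by
  refine ⟨fun a b => by simp [minColoring, min_comm], fun a b d _ _ _ h => ?_⟩
  have : min (a : ℕ) b = min (a : ℕ) d ∨ min (a : ℕ) b = min (b : ℕ) d ∨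
      min (a : ℕ) d = min (b : ℕ) d := by omega
  simp only [minColoring] at h
  rcases this with h' | h' | h' <;> simp [h'] at h

theorem val_minColoring_of_lt (hm : m ≤ k + 1) {x y : Fin m} (hxy : x < y) :
    (minColoring k m x y : ℕ) = x := by
  have hmin : min (x : ℕ) y = x := by omega
  simp [minColoring, hmin, Nat.mod_eq_of_lt (show (x : ℕ) < k by omega)]

theorem card_sub_one_le_card_colorsOn_minColoring (hm : m ≤ k + 1) (S : Finset (Fin m)) :
    #S - 1 ≤ #(colorsOn (minColoring k m) S) := by
  obtain rfl | hne := S.eq_empty_or_nonempty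
  · simp
  have hM := S.max'_mem hne
  have hinj : Set.InjOn (fun x => minColoring k m x (S.max' hne)) (S.erase (S.max' hne)) :=
    fun x hx y hy hxy => Fin.ext <| by
      rwa [Fin.ext_iff, val_minColoring_of_lt hm (S.lt_max'_of_mem_erase_max' hne hx),
        val_minColoring_of_lt hm (S.lt_max'_of_mem_erase_max' hne hy)] at hxy
  calc #S - 1 = #((S.erase (S.max' hne)).image fun x => minColoring k m x (S.max' hne)) := by
        rw [card_image_of_injOn hinj, card_erase_of_mem hM]
    _ ≤ #(colorsOn (minColoring k m) S) := card_le_card <| image_subset_iff.2 fun x hx =>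
        mem_colorsOn.2 ⟨x, mem_of_mem_erase hx, _, hM, ne_of_mem_erase hx, rfl⟩

end MinColoring

theorem gallaiNum_q_eq_p_sub_two (p k : ℕ) (hp : 4 ≤ p) (hk : p - 2 ≤ k) :
    gallaiNum k (p - 2) p = k + 2 ∧
    (∀ c : Fin (k + 2) → Fin (k + 2) → Fin k, IsGallai c →
      ∃ S : Finset (Fin (k + 2)), S.card = p ∧ (colorsOn c S).card ≤ p - 2) ∧
    (∃ c : Fin (k + 1) → Fin (k + 1) → Fin k, IsGallai c ∧
      ∀ S : Finset (Fin (k + 1)), S.card = p → p - 1 ≤ (colorsOn c S).card) := by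
  have : NeZero k := ⟨by omega⟩
  have upper : ∀ c : Fin (k + 2) → Fin (k + 2) → Fin k, IsGallai c →
      ∃ S : Finset (Fin (k + 2)), S.card = p ∧ (colorsOn c S).card ≤ p - 2 := fun c hc => by
    obtain ⟨S, -, hS⟩ := exists_subset_card_eq_card_colorsOn_le hc hp univ (by simpa using hk)
      (by simpa using card_le_univ (colorsOn c univ))
    exact ⟨S, hS⟩
  have lower : ∀ n ≤ k + 1, ∀ S : Finset (Fin n), S.card = p →
      p - 1 ≤ (colorsOn (minColoring k n) S).card := fun n hn S hS =>
    hS ▸ card_sub_one_le_card_colorsOn_minColoring hn S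
  refine ⟨le_antisymm (Nat.sInf_le ⟨by omega, upper⟩) ?_, upper,
    minColoring k (k + 1), isGallai_minColoring, lower _ le_rfl⟩
  refine le_csInf ⟨k + 2, by omega, upper⟩ fun n ⟨_, hn⟩ => ?_
  by_contra! hlt
  obtain ⟨S, hS, hSc⟩ := hn _ isGallai_minColoring
  have := lower n (by omega) S hS
  omega
end

section
/- For all integers p ≥ 17 and k ≥ ⌊√(p−1)⌋ − 1, we have g^k_{⌊√(p−1)⌋−1}(p) ≥ k² + 2k + 2; that is, there exists a Gallai-k-coloring of the complete graph on (k+1)² vertices in which every set of p vertices spans edges in at least ⌊√(p−1)⌋ colors. -/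
open Finset

/-! ### Auxiliary lemmas -/

lemma mem_colorsOn_s4 {V β : Type*} [DecidableEq V] [DecidableEq β]
    (c : V → V → β) {S : Finset V} {u v : V} (hu : u ∈ S) (hv : v ∈ S) (huv : u ≠ v) :
    c u v ∈ colorsOn c S :=
  Finset.mem_image.mpr ⟨(u, v),
    Finset.mem_filter.mpr ⟨Finset.mem_product.mpr ⟨hu, hv⟩, huv⟩, rfl⟩

section Construction

variable (k : ℕ)

/-- Decomposition of a vertex of `K_{(k+1)^2}` into a (block, position) pair. -/
def blk (u : Fin ((k + 1) ^ 2)) : Fin (k + 1) × Fin (k + 1) :=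
  finProdFinEquiv.symm (Fin.cast (by ring) u)

lemma blk_injective : Function.Injective (blk k) := fun u v h =>
  Fin.cast_injective _ (finProdFinEquiv.symm.injective h)

/-- Natural-number value of the coloring: min of positions inside a block,
min of block indices across blocks. -/
def cval (u v : Fin ((k + 1) ^ 2)) : ℕ :=
  if ((blk k u).1 : ℕ) = ((blk k v).1 : ℕ) then min ((blk k u).2 : ℕ) ((blk k v).2 : ℕ)
  else min ((blk k u).1 : ℕ) ((blk k v).1 : ℕ)

lemma cval_symm (u v : Fin ((k + 1) ^ 2)) : cval k u v = cval k v u := by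
  unfold cval
  rcases eq_or_ne ((blk k u).1 : ℕ) ((blk k v).1 : ℕ) with h | h
  · rw [if_pos h, if_pos h.symm, min_comm]
  · rw [if_neg h, if_neg (Ne.symm h), min_comm]

lemma blk_ne {u v : Fin ((k + 1) ^ 2)} (h : u ≠ v) :
    ¬(((blk k u).1 : ℕ) = ((blk k v).1 : ℕ) ∧ ((blk k u).2 : ℕ) = ((blk k v).2 : ℕ)) := by
  rintro ⟨h1, h2⟩
  exact h (blk_injective k (Prod.ext (Fin.ext h1) (Fin.ext h2)))

lemma cval_lt (hk : 0 < k) {u v : Fin ((k + 1) ^ 2)} (h : u ≠ v) : cval k u v < k := by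
  have h1 : ((blk k u).1 : ℕ) < k + 1 := (blk k u).1.isLt
  have h2 : ((blk k v).1 : ℕ) < k + 1 := (blk k v).1.isLt
  have h3 : ((blk k u).2 : ℕ) < k + 1 := (blk k u).2.isLt
  have h4 : ((blk k v).2 : ℕ) < k + 1 := (blk k v).2.isLt
  have h5 := blk_ne k h
  unfold cval
  split_ifs with hI <;> omega

/-- The Gallai coloring of `K_{(k+1)^2}` with `k` colors. -/
def ccol (hk : 0 < k) (u v : Fin ((k + 1) ^ 2)) : Fin k :=
  ⟨cval k u v % k, Nat.mod_lt _ hk⟩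

lemma ccol_val (hk : 0 < k) {u v : Fin ((k + 1) ^ 2)} (h : u ≠ v) :
    (ccol k hk u v : ℕ) = cval k u v :=
  Nat.mod_eq_of_lt (cval_lt k hk h)

lemma ccol_gallai (hk : 0 < k) : IsGallai (ccol k hk) := by
  constructor
  · intro a b
    exact Fin.ext (by simp only [ccol, cval_symm])
  · intro a b d hab had hbd
    rintro ⟨h1, h2, h3⟩
    have n1 : cval k a b ≠ cval k a d := by
      intro h; exact h1 (Fin.ext (by simp only [ccol, h]))
    have n2 : cval k a b ≠ cval k b d := by
      intro h; exact h2 (Fin.ext (by simp only [ccol, h]))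
    have n3 : cval k a d ≠ cval k b d := by
      intro h; exact h3 (Fin.ext (by simp only [ccol, h]))
    have e1 := blk_ne k hab
    have e2 := blk_ne k had
    have e3 := blk_ne k hbd
    unfold cval at n1 n2 n3
    split_ifs at n1 n2 n3 <;> omega

/-- Counting helper: if every element of `X` except possibly the largest is realized
as the value of a color in `C`, then `X.card ≤ C.card + 1`. -/
lemma card_le_of_mins {k : ℕ} (C : Finset (Fin k)) (X : Finset ℕ)
    (h : ∀ x ∈ X, ∀ y ∈ X, x < y → ∃ γ ∈ C, (γ : ℕ) = x) : X.card ≤ C.card + 1 := by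
  rcases X.eq_empty_or_nonempty with rfl | hne
  · simp
  · have hsub : X.erase (X.max' hne) ⊆ C.image Fin.val := by
      intro x hx
      obtain ⟨hxne, hxX⟩ := Finset.mem_erase.mp hx
      have hxlt : x < X.max' hne := lt_of_le_of_ne (Finset.le_max' _ _ hxX) hxne
      obtain ⟨γ, hγ, hγx⟩ := h x hxX _ (X.max'_mem hne) hxlt
      exact Finset.mem_image.mpr ⟨γ, hγ, hγx⟩
    have h1 := Finset.card_le_card hsub
    have h2 := Finset.card_image_le (s := C) (f := Fin.val)
    have h3 : (X.erase (X.max' hne)).card = X.card - 1 :=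
      Finset.card_erase_of_mem (X.max'_mem hne)
    have h4 : 0 < X.card := Finset.card_pos.mpr hne
    omega

/-- Main counting bound: any vertex set uses at least `√|S|` colors
(in the form `|S| ≤ (t+1)²`). -/
lemma card_le_sq (hk : 0 < k) (S : Finset (Fin ((k + 1) ^ 2))) :
    S.card ≤ ((colorsOn (ccol k hk) S).card + 1) ^ 2 := by
  set C := colorsOn (ccol k hk) S with hC
  set t := C.card with ht
  have hfib : ∀ b : ℕ, (S.filter fun u => ((blk k u).1 : ℕ) = b).card ≤ t + 1 := by
    intro b
    set T := S.filter fun u => ((blk k u).1 : ℕ) = b with hT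
    have hinj : Set.InjOn (fun u => ((blk k u).2 : ℕ)) ↑T := by
      intro u hu v hv h
      simp only [Finset.coe_filter, Set.mem_setOf_eq, hT] at hu hv
      by_contra hne
      exact blk_ne k hne ⟨hu.2.trans hv.2.symm, h⟩
    have himg : T.card = (T.image fun u => ((blk k u).2 : ℕ)).card :=
      (Finset.card_image_of_injOn hinj).symm
    rw [himg]
    apply card_le_of_mins
    intro x hx y hy hxy
    obtain ⟨u, hu, hux⟩ := Finset.mem_image.mp hx
    obtain ⟨v, hv, hvy⟩ := Finset.mem_image.mp hy
    have hub : ((blk k u).1 : ℕ) = b := (Finset.mem_filter.mp hu).2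
    have hvb : ((blk k v).1 : ℕ) = b := (Finset.mem_filter.mp hv).2
    have huv : u ≠ v := by
      intro h; rw [h] at hux; omega
    refine ⟨ccol k hk u v,
      mem_colorsOn_s4 _ (Finset.mem_filter.mp hu).1 (Finset.mem_filter.mp hv).1 huv, ?_⟩
    have : (ccol k hk u v : ℕ) = min ((blk k u).2 : ℕ) ((blk k v).2 : ℕ) := by
      rw [ccol_val k hk huv]; unfold cval; rw [if_pos (hub.trans hvb.symm)]
    omega
  have hB : (S.image fun u => ((blk k u).1 : ℕ)).card ≤ t + 1 := by
    apply card_le_of_mins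
    intro x hx y hy hxy
    obtain ⟨u, hu, hux⟩ := Finset.mem_image.mp hx
    obtain ⟨v, hv, hvy⟩ := Finset.mem_image.mp hy
    have huv : u ≠ v := by
      intro h; rw [h] at hux; omega
    refine ⟨ccol k hk u v, mem_colorsOn_s4 _ hu hv huv, ?_⟩
    have : (ccol k hk u v : ℕ) = min ((blk k u).1 : ℕ) ((blk k v).1 : ℕ) := by
      rw [ccol_val k hk huv]; unfold cval; rw [if_neg (by omega)]
    omega
  calc S.card
      = ∑ b ∈ S.image (fun u => ((blk k u).1 : ℕ)),
          (S.filter fun u => ((blk k u).1 : ℕ) = b).card :=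
        Finset.card_eq_sum_card_fiberwise fun u hu => Finset.mem_image_of_mem _ hu
    _ ≤ ∑ _b ∈ S.image (fun u => ((blk k u).1 : ℕ)), (t + 1) :=
        Finset.sum_le_sum fun b _ => hfib b
    _ = (S.image (fun u => ((blk k u).1 : ℕ))).card * (t + 1) := by
        rw [Finset.sum_const, smul_eq_mul]
    _ ≤ (t + 1) * (t + 1) := Nat.mul_le_mul_right _ hB
    _ = (t + 1) ^ 2 := (sq _).symm

end Construction

/-- Greedy chain extraction for the Ramsey argument. -/
lemma chain_exists {n k : ℕ} (hk : 0 < k) (c : Fin n → Fin n → Fin k) :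
    ∀ (m : ℕ) (T : Finset (Fin n)), (k + 1) ^ m ≤ T.card →
      ∃ S : Finset (Fin n), S ⊆ T ∧ S.card = m ∧ ∃ f : Fin n → Fin k,
        ∀ u ∈ S, ∀ v ∈ S, u < v → c u v = f u := by
  intro m
  induction m with
  | zero =>
    intro T _
    exact ⟨∅, Finset.empty_subset _, Finset.card_empty, fun _ => ⟨0, hk⟩, by simp⟩
  | succ m ih =>
    intro T hT
    have hTne : T.Nonempty := Finset.card_pos.mp
      (lt_of_lt_of_le (pow_pos (by omega) _) hT)
    set a := T.min' hTne with ha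
    have haT : a ∈ T := T.min'_mem hTne
    have hcard : (Finset.univ : Finset (Fin k)).card * (k + 1) ^ m ≤ (T.erase a).card := by
      rw [Finset.card_erase_of_mem haT, Finset.card_univ, Fintype.card_fin]
      have he : (k + 1) ^ (m + 1) = k * (k + 1) ^ m + (k + 1) ^ m := by ring
      have hp : 0 < (k + 1) ^ m := pow_pos (by omega) m
      omega
    obtain ⟨γ, _, hγ⟩ := Finset.exists_le_card_fiber_of_mul_le_card_of_maps_to
      (fun v _ => Finset.mem_univ (c a v)) ⟨⟨0, hk⟩, Finset.mem_univ _⟩ hcard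
    obtain ⟨S', hS'sub, hS'card, f', hf'⟩ := ih _ hγ
    have hS'T : S' ⊆ T.erase a := hS'sub.trans (Finset.filter_subset _ _)
    have haS' : a ∉ S' := fun h => (Finset.mem_erase.mp (hS'T h)).1 rfl
    refine ⟨insert a S', ?_, ?_, fun v => if v = a then γ else f' v, ?_⟩
    · exact Finset.insert_subset haT (hS'T.trans (Finset.erase_subset _ _))
    · rw [Finset.card_insert_of_notMem haS', hS'card]
    · intro u hu v hv huv
      rcases Finset.mem_insert.mp hu with rfl | huS
      · have hvS : v ∈ S' := by
          rcases Finset.mem_insert.mp hv with rfl | h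
          · exact absurd huv (lt_irrefl _)
          · exact h
        show c a v = if a = a then γ else f' a
        rw [if_pos rfl]
        exact (Finset.mem_filter.mp (hS'sub hvS)).2
      · have hua : u ≠ a := fun h => haS' (h ▸ huS)
        have hau : a < u := lt_of_le_of_ne
          (T.min'_le u ((Finset.erase_subset _ _) (hS'T huS))) (Ne.symm hua)
        have hvS : v ∈ S' := by
          rcases Finset.mem_insert.mp hv with rfl | h
          · exact absurd (lt_trans hau huv) (lt_irrefl _)
          · exact h
        show c u v = if u = a then γ else f' u
        rw [if_neg hua]
        exact hf' u huS v hvS huv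

/-- Ramsey-type statement: for large enough `n` the defining set of `gallaiNum`
is inhabited. -/
lemma ramsey_mem (k p q : ℕ) (hk : 0 < k) (hq : 1 ≤ q) :
    (k + 1) ^ (k * (p - 1) + 1) ∈ {n : ℕ | 0 < n ∧ ∀ c : Fin n → Fin n → Fin k,
      IsGallai c → ∃ S : Finset (Fin n), S.card = p ∧ (colorsOn c S).card ≤ q} := by
  refine ⟨pow_pos (by omega) _, fun c hgal => ?_⟩
  obtain ⟨S, _, hScard, f, hf⟩ := chain_exists hk c (k * (p - 1) + 1) Finset.univ
    (by rw [Finset.card_univ, Fintype.card_fin])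
  have hcard : (Finset.univ : Finset (Fin k)).card * (p - 1) < S.card := by
    rw [Finset.card_univ, Fintype.card_fin, hScard]
    omega
  obtain ⟨γ, _, hγ⟩ := Finset.exists_lt_card_fiber_of_mul_lt_card_of_maps_to
    (fun u _ => Finset.mem_univ (f u)) hcard
  have hple : p ≤ (S.filter fun u => f u = γ).card := by omega
  obtain ⟨M, hMsub, hMcard⟩ := Finset.exists_subset_card_eq hple
  refine ⟨M, hMcard, ?_⟩
  have hsub : colorsOn c M ⊆ {γ} := by
    intro x hx
    rw [colorsOn, Finset.mem_image] at hx
    obtain ⟨⟨u, v⟩, hmem, rfl⟩ := hx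
    obtain ⟨hin, hne⟩ := Finset.mem_filter.mp hmem
    obtain ⟨hu, hv⟩ := Finset.mem_product.mp hin
    have hu' := Finset.mem_filter.mp (hMsub hu)
    have hv' := Finset.mem_filter.mp (hMsub hv)
    have : c u v = γ := by
      rcases lt_or_gt_of_ne (hne : u ≠ v) with h | h
      · rw [hf u hu'.1 v hv'.1 h, hu'.2]
      · rw [hgal.1 u v, hf v hv'.1 u hu'.1 h, hv'.2]
    simp [this]
  calc (colorsOn c M).card ≤ ({γ} : Finset (Fin k)).card := Finset.card_le_card hsub
    _ = 1 := Finset.card_singleton _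
    _ ≤ q := hq

theorem gallaiNum_sqrt_lower (p k : ℕ) (hp : 17 ≤ p) (hk : Nat.sqrt (p - 1) - 1 ≤ k) :
    k ^ 2 + 2 * k + 2 ≤ gallaiNum k (Nat.sqrt (p - 1) - 1) p ∧
    ∃ c : Fin ((k + 1) ^ 2) → Fin ((k + 1) ^ 2) → Fin k, IsGallai c ∧
      ∀ S : Finset (Fin ((k + 1) ^ 2)), S.card = p →
        Nat.sqrt (p - 1) ≤ (colorsOn c S).card := by
  have hs4 : 4 ≤ Nat.sqrt (p - 1) := Nat.le_sqrt.mpr (by omega)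
  have hk0 : 0 < k := by omega
  have hmain : ∀ S : Finset (Fin ((k + 1) ^ 2)), S.card = p →
      Nat.sqrt (p - 1) ≤ (colorsOn (ccol k hk0) S).card := by
    intro S hS
    by_contra hlt
    push_neg at hlt
    have h1 : (colorsOn (ccol k hk0) S).card + 1 ≤ Nat.sqrt (p - 1) := by omega
    have h2 := card_le_sq k hk0 S
    have h3 : ((colorsOn (ccol k hk0) S).card + 1) ^ 2 ≤ Nat.sqrt (p - 1) ^ 2 :=
      Nat.pow_le_pow_left h1 2
    have h4 : Nat.sqrt (p - 1) ^ 2 ≤ p - 1 := Nat.sqrt_le' _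
    omega
  refine ⟨?_, ccol k hk0, ccol_gallai k hk0, hmain⟩
  unfold gallaiNum
  apply le_csInf ⟨_, ramsey_mem k p (Nat.sqrt (p - 1) - 1) hk0 (by omega)⟩
  intro n hn
  obtain ⟨hn0, hprop⟩ := hn
  by_contra hcon
  push_neg at hcon
  have hle : n ≤ (k + 1) ^ 2 := by
    have : (k + 1) ^ 2 = k ^ 2 + 2 * k + 1 := by ring
    omega
  set c' : Fin n → Fin n → Fin k :=
    fun u v => ccol k hk0 (Fin.castLE hle u) (Fin.castLE hle v) with hc'
  have hinj : Function.Injective (Fin.castLE hle) := Fin.castLE_injective hle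
  have hg : IsGallai c' := by
    obtain ⟨hsym, hrt⟩ := ccol_gallai k hk0
    refine ⟨fun a b => hsym _ _, fun a b d hab had hbd => ?_⟩
    exact hrt _ _ _ (fun h => hab (hinj h)) (fun h => had (hinj h)) (fun h => hbd (hinj h))
  obtain ⟨S, hScard, hSq⟩ := hprop c' hg
  have himgcard : (S.image (Fin.castLE hle)).card = p := by
    rw [Finset.card_image_of_injective _ hinj, hScard]
  have hsub : colorsOn (ccol k hk0) (S.image (Fin.castLE hle)) ⊆ colorsOn c' S := by
    intro x hx
    rw [colorsOn, Finset.mem_image] at hx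
    obtain ⟨⟨a, b⟩, hmem, rfl⟩ := hx
    obtain ⟨hin, hne⟩ := Finset.mem_filter.mp hmem
    obtain ⟨ha, hb⟩ := Finset.mem_product.mp hin
    obtain ⟨u, hu, rfl⟩ := Finset.mem_image.mp ha
    obtain ⟨v, hv, rfl⟩ := Finset.mem_image.mp hb
    have huv : u ≠ v := fun h => (hne : _ ≠ _) (by rw [h])
    exact mem_colorsOn_s4 c' hu hv huv
  have hbig := hmain _ himgcard
  have hcc := Finset.card_le_card hsub
  omega
end

section
/- For all integers p ≥ 8 and k ≥ p−3, we have g^k_{p−3}(p) = k+3; that is, every Gallai-k-coloring of K_{k+3} contains a set of p vertices spanning edges in at most p−3 colors, and there exists a Gallai-k-coloring of K_{k+2} in which every set of p vertices spans edges in at least p−2 colors. -/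
/-!
Give each colour of a Gallai colouring on `S` weight 1 if all its edges pass through one vertex
(a star colour) and weight 2 otherwise. The total weight `W S` satisfies `2 W S + 4 ≤ 3 |S|`
once `|S| ≥ 2`. Indeed, by Gallai's theorem the components of the edges avoiding some two colours
`x, y` split `S` into at least two parts, any two of them joined in a single colour. With three
parts two of the three joining colours agree, so after merging either two parts are joined in one
colour or there are at least four parts. Now induct over the parts: a colour living inside a single
part keeps its weight, and each crossing colour costs at most 2, or 1 when it is a star at a
singleton part.

Hence a colouring of `n ≥ 9` vertices with exactly `n - 3` colours has a star colour, and deleting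
its centre loses that colour. So from `K_{k+3}`, which sees at most `k` colours, vertices can be
deleted one at a time, keeping at most (number of vertices) `- 3` colours, down to `p` vertices.
For the lower bound colour `ij` by `min i j`, capped at `k - 1`, on `K_{k+2}`: in any `p`-set the
edges to its largest vertex already show `p - 2` colours.
-/

open Finset

namespace IsGallai

variable {V β : Type*} {c : V → V → β}

theorem eq_of_ne_of_ne_s5 (hc : IsGallai c) {a b d : V} (hab : a ≠ b) (had : a ≠ d) (hbd : b ≠ d)
    (h₁ : c a b ≠ c a d) (h₂ : c a b ≠ c b d) : c a d = c b d := by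
  by_contra h₃
  exact hc.2 a b d hab had hbd ⟨h₁, h₂, h₃⟩

end IsGallai

namespace Gallai

section Labeling

variable {V β ι : Type*} [DecidableEq ι] {f : V → ι} {S : Finset V}

theorem fiber_ssubset {i : ι} (hm : 2 ≤ (S.image f).card) :
    {u ∈ S | f u = i} ⊂ S := by
  obtain ⟨j, hj, hji⟩ := exists_mem_ne hm i
  obtain ⟨a, ha, rfl⟩ := mem_image.1 hj
  exact filter_ssubset.2 ⟨a, ha, hji⟩

theorem eq_or_eq_of_card_image_eq_two {i : ι} {a a' : V} (hm : (S.image f).card = 2)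
    (hi : i ∈ S.image f) (ha : a ∈ S) (ha' : a' ∈ S) (hne : f a ≠ f a') : f a = i ∨ f a' = i := by
  obtain ⟨j, j', -, hjj'⟩ := card_eq_two.1 hm
  have hfa := mem_image_of_mem f ha
  have hfa' := mem_image_of_mem f ha'
  rw [hjj'] at hfa hfa' hi
  simp only [mem_insert, mem_singleton] at hfa hfa' hi
  grind

theorem exists_fiber_eq_singleton {i : ι} (hi : i ∈ S.image f)
    (h : {u ∈ S | f u = i}.card < 2) : ∃ u, {u ∈ S | f u = i} = {u} := by
  obtain ⟨a, ha, rfl⟩ := mem_image.1 hi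
  have : 0 < {u ∈ S | f u = f a}.card := card_pos.2 ⟨a, mem_filter.2 ⟨ha, rfl⟩⟩
  exact card_eq_one.1 (by omega)

variable [DecidableEq β] {c : V → V → β} {b : β}

/-- A map `f : V → ι` stands for the partition of `S` into the fibers `{u ∈ S | f u = i}`. -/
def crossColors (c : V → V → β) (f : V → ι) (S : Finset V) : Finset β :=
  ((S ×ˢ S).filter fun p => f p.1 ≠ f p.2).image fun p => c p.1 p.2

theorem mem_crossColors :
    b ∈ crossColors c f S ↔ ∃ a ∈ S, ∃ a' ∈ S, f a ≠ f a' ∧ c a a' = b := by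
  simp [crossColors, and_assoc]

end Labeling

section AvoidGraph

variable {V β : Type*} {c : V → V → β} {S : Finset V} {x y : β} {v u u' w w' a b : V}

/-- The components of `avoidGraph c S x y` are the parts of a Gallai partition of `S` whose
reduced graph is coloured with `x` and `y`. -/
def avoidGraph (c : V → V → β) (S : Finset V) (x y : β) : SimpleGraph V :=
  SimpleGraph.fromRel fun u w => u ∈ S ∧ w ∈ S ∧ c u w ≠ x ∧ c u w ≠ y

theorem avoidGraph_adj (hc : IsGallai c) :
    (avoidGraph c S x y).Adj u w ↔ u ≠ w ∧ u ∈ S ∧ w ∈ S ∧ c u w ≠ x ∧ c u w ≠ y := by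
  simp only [avoidGraph, SimpleGraph.fromRel_adj, hc.1 w u]
  tauto

theorem exists_mem_not_reachable {G : SimpleGraph V} (ha : a ∈ S) (hb : b ∈ S)
    (hab : ¬ G.Reachable a b) (u : V) : ∃ z ∈ S, ¬ G.Reachable u z := by
  by_cases h : G.Reachable u a
  exacts [⟨b, hb, fun h' => hab (h.symm.trans h')⟩, ⟨a, ha, h⟩]

theorem color_eq_or_eq_of_not_reachable (hu : u ∈ S) (hw : w ∈ S)
    (h : ¬ (avoidGraph c S x y).Reachable u w) : c u w = x ∨ c u w = y := by
  by_contra hxy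
  push Not at hxy
  refine h (SimpleGraph.Adj.reachable ?_)
  exact (SimpleGraph.fromRel_adj _ _ _).2 ⟨fun huw => h (huw ▸ .refl _), .inl ⟨hu, hw, hxy⟩⟩

theorem mem_of_reachable (hc : IsGallai c) {A : Finset V}
    (hA : ∀ u ∈ A, ∀ w ∈ S, w ∉ A → c u w = x ∨ c u w = y) (ha : a ∈ A)
    (h : (avoidGraph c S x y).Reachable a w) : w ∈ A := by
  rw [SimpleGraph.reachable_iff_reflTransGen] at h
  induction h with
  | refl => exact ha
  | tail _ hadj ih =>
    obtain ⟨-, -, hw, hx, hy⟩ := (avoidGraph_adj hc).1 hadj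
    by_contra hwA
    exact (hA _ ih _ hw hwA).elim hx hy

theorem mem_of_reachable_of_mem (hc : IsGallai c) (hu : u ∈ S)
    (h : (avoidGraph c S x y).Reachable u w) : w ∈ S :=
  mem_of_reachable hc (fun _ _ _ hw hwS => absurd hw hwS) hu h

theorem not_reachable_of_forall_color_eq_or_eq (hc : IsGallai c)
    (hv : ∀ w ∈ S, w ≠ u → c u w = x ∨ c u w = y) (hw : w ≠ u) :
    ¬ (avoidGraph c S x y).Reachable u w := fun h =>
  hw (mem_singleton.1 (mem_of_reachable hc (fun _ hu w hwS hw =>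
    mem_singleton.1 hu ▸ hv w hwS (by simpa using hw)) (mem_singleton_self u) h))

theorem color_eq_of_reachable (hc : IsGallai c) (hw : w ∈ S)
    (h : (avoidGraph c S x y).Reachable u u') (hnot : ¬ (avoidGraph c S x y).Reachable u w) :
    c u w = c u' w := by
  rw [SimpleGraph.reachable_iff_reflTransGen] at h
  induction h with
  | refl => rfl
  | @tail s s' hus hadj ih =>
    rw [ih]
    have hus' := (SimpleGraph.reachable_iff_reflTransGen _ _).2 hus
    have hs : ¬ (avoidGraph c S x y).Reachable s w := fun h => hnot (hus'.trans h)
    have hs' : ¬ (avoidGraph c S x y).Reachable s' w := fun h =>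
      hnot ((hus'.trans hadj.reachable).trans h)
    obtain ⟨hss', hsS, hs'S, hx, hy⟩ := (avoidGraph_adj hc).1 hadj
    have hsw := color_eq_or_eq_of_not_reachable hsS hw hs
    have hs'w := color_eq_or_eq_of_not_reachable hs'S hw hs'
    refine hc.eq_of_ne_of_ne_s5 hss' (fun h => hs (h ▸ .refl _)) (fun h => hs' (h ▸ .refl _))
      ?_ ?_ <;> grind

theorem color_eq_of_reachable_of_reachable (hc : IsGallai c) (hu : u ∈ S) (hw : w ∈ S)
    (hu' : (avoidGraph c S x y).Reachable u u') (hw' : (avoidGraph c S x y).Reachable w w')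
    (hnot : ¬ (avoidGraph c S x y).Reachable u w) : c u w = c u' w' := by
  have hnot' : ¬ (avoidGraph c S x y).Reachable w u' := fun h => hnot (hu'.trans h.symm)
  rw [color_eq_of_reachable hc hw hu' hnot, hc.1,
    color_eq_of_reachable hc (mem_of_reachable_of_mem hc hu hu') hw' hnot', hc.1]

theorem color_eq_of_not_reachable_of_color_eq (hc : IsGallai c) {z : β} (hv : v ∉ S)
    (hu : u ∈ S) (ha : a ∈ S) (hz : z = x ∨ z = y) (hvu : c v u = z)
    (hva : c v a ≠ x ∧ c v a ≠ y) (hnr : ¬ (avoidGraph c S x y).Reachable u a) : c u a = z := by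
  have hua := color_eq_or_eq_of_not_reachable hu ha hnr
  by_contra hne
  have := hc.eq_of_ne_of_ne_s5 (a := v) (b := u) (d := a) (by rintro rfl; exact hv hu)
    (by rintro rfl; exact hv ha) (by rintro rfl; exact hnr .rfl) (by grind) (by grind)
  grind

theorem color_eq_of_not_reachable (hc : IsGallai c) (hv : v ∉ S) (hu : u ∈ S) (hu' : u' ∈ S)
    (hvu : c v u ≠ x ∧ c v u ≠ y) (hvu' : c v u' ≠ x ∧ c v u' ≠ y)
    (hnr : ¬ (avoidGraph c S x y).Reachable u u') : c v u = c v u' := by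
  have huu' := color_eq_or_eq_of_not_reachable hu hu' hnr
  have := hc.eq_of_ne_of_ne_s5 (a := u) (b := u') (d := v) (by rintro rfl; exact hnr .rfl)
    (by rintro rfl; exact hv hu) (by rintro rfl; exact hv hu') (by rw [hc.1 u v]; grind)
    (by rw [hc.1 u' v]; grind)
  rw [hc.1 v u, hc.1 v u', this]

theorem exists_forall_reachable_color_eq_or_eq (hc : IsGallai c) (hv : v ∉ S)
    (ha : a ∈ S) (hb : b ∈ S) (hab : ¬ (avoidGraph c S x y).Reachable a b) (hxy : x ≠ y)
    (hu : u ∈ S) (hux : c v u = x) (hw : w ∈ S) (hwy : c v w = y) :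
    ∃ t ∈ S, ∀ u ∈ S, (avoidGraph c S x y).Reachable t u → c v u = x ∨ c v u = y := by
  by_contra! hreach
  by_cases huw : (avoidGraph c S x y).Reachable u w
  · obtain ⟨z, hz, hnz⟩ := exists_mem_not_reachable ha hb hab u
    obtain ⟨a', ha', hza', hx, hy⟩ := hreach z hz
    have hnua : ¬ (avoidGraph c S x y).Reachable u a' := fun h => hnz (h.trans hza'.symm)
    have h₁ := color_eq_of_not_reachable_of_color_eq hc hv hu ha' (.inl rfl) hux ⟨hx, hy⟩ hnua
    have h₂ := color_eq_of_not_reachable_of_color_eq hc hv hw ha' (.inr rfl) hwy ⟨hx, hy⟩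
      fun h => hnua (huw.trans h)
    exact hxy (h₁.symm.trans ((color_eq_of_reachable hc ha' huw hnua).trans h₂))
  · obtain ⟨a, ha, hua, hx, hy⟩ := hreach u hu
    obtain ⟨a', ha', hwa', hx', hy'⟩ := hreach w hw
    have h₁ := color_eq_of_not_reachable_of_color_eq hc hv hw ha (.inr rfl) hwy ⟨hx, hy⟩
      fun h => huw (hua.trans h.symm)
    have h₂ := color_eq_of_not_reachable_of_color_eq hc hv hu ha' (.inl rfl) hux ⟨hx', hy'⟩
      fun h => huw (h.trans hwa'.symm)
    have e₁ := color_eq_of_reachable hc hw hua huw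
    have e₂ := color_eq_of_reachable hc hu hwa' fun h => huw h.symm
    rw [hc.1 a w, h₁] at e₁
    rw [hc.1 a' u, h₂] at e₂
    exact hxy (e₂.symm.trans ((hc.1 w u).trans e₁))

theorem color_eq_of_monochromatic_class (hc : IsGallai c) {q r t s s' : V}
    (hq : q ∈ S) (hr : r ∈ S) (ht : t ∈ S)
    (hqr : ¬ (avoidGraph c S x y).Reachable q r) (hqt : ¬ (avoidGraph c S x y).Reachable q t)
    (hcol : c q r = c q t)
    (hcover : ∀ s ∈ S, (avoidGraph c S x y).Reachable q s ∨ (avoidGraph c S x y).Reachable r s ∨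
      (avoidGraph c S x y).Reachable t s)
    (hs' : s' ∈ S) (hqs : (avoidGraph c S x y).Reachable q s)
    (hqs' : ¬ (avoidGraph c S x y).Reachable q s') : c s s' = c q r := by
  rcases hcover s' hs' with h | h | h
  · exact absurd h hqs'
  · exact (color_eq_of_reachable_of_reachable hc hq hr hqs h hqr).symm
  · rw [hcol]
    exact (color_eq_of_reachable_of_reachable hc hq ht hqs h hqt).symm

end AvoidGraph

section GallaiCut

variable {V β : Type*} [DecidableEq V] {c : V → V → β} {S : Finset V} {x y : β} {v a b : V}

theorem exists_not_reachable_insert_of_forall_reachable (hc : IsGallai c) {u₀ : V} (hv : v ∉ S)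
    (ha : a ∈ S) (hb : b ∈ S) (hab : ¬ (avoidGraph c S x y).Reachable a b)
    (hu₀ : ∀ u ∈ S, c v u ≠ x → c v u ≠ y → (avoidGraph c S x y).Reachable u₀ u) :
    ∃ t ∈ S, ¬ (avoidGraph c (insert v S) x y).Reachable v t := by
  classical
  obtain ⟨t, ht, hnt⟩ := exists_mem_not_reachable ha hb hab u₀
  refine ⟨t, ht, fun h => ?_⟩
  -- `v` together with the component of `u₀` is closed
  have := mem_of_reachable hc (A := insert v {u ∈ S | (avoidGraph c S x y).Reachable u₀ u})
    ?_ (mem_insert_self _ _) h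
  · simp only [mem_insert, mem_filter] at this
    exact this.elim (fun h => hv (h ▸ ht)) fun h => hnt h.2
  intro u hu w hw hwA
  simp only [mem_insert, mem_filter, not_or, not_and] at hu hw hwA
  have hwS : w ∈ S := hw.resolve_left hwA.1
  rcases hu with rfl | ⟨huS, hu₀u⟩
  · by_contra h
    push Not at h
    exact hwA.2 hwS (hu₀ w hwS h.1 h.2)
  · exact color_eq_or_eq_of_not_reachable huS hwS fun h => hwA.2 hwS (hu₀u.trans h)

theorem not_reachable_insert_of_forall (hc : IsGallai c) {t : V} (hv : v ∉ S) (ht : t ∈ S)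
    (h : ∀ u ∈ S, (avoidGraph c S x y).Reachable t u → c v u = x ∨ c v u = y) :
    ¬ (avoidGraph c (insert v S) x y).Reachable t v := by
  classical
  intro htv
  have := mem_of_reachable hc (A := {u ∈ S | (avoidGraph c S x y).Reachable t u}) ?_
    (by simp [ht]) htv
  · exact hv (mem_filter.1 this).1
  intro u hu w hw hwA
  simp only [mem_insert, mem_filter, not_and] at hu hw hwA
  rcases hw with rfl | hwS
  · rw [hc.1]
    exact h u hu.1 hu.2
  · exact color_eq_or_eq_of_not_reachable hu.1 hwS fun h => hwA hwS (hu.2.trans h)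

theorem exists_not_reachable_insert_of_not_reachable (hc : IsGallai c) {u₀ u₁ : V} (hv : v ∉ S)
    (ha : a ∈ S) (hb : b ∈ S) (hab : ¬ (avoidGraph c S x y).Reachable a b)
    (hu₀ : u₀ ∈ S) (hu₁ : u₁ ∈ S) (hvu₀ : c v u₀ ≠ x ∧ c v u₀ ≠ y)
    (hvu₁ : c v u₁ ≠ x ∧ c v u₁ ≠ y) (h₀₁ : ¬ (avoidGraph c S x y).Reachable u₀ u₁) :
    ∃ x' y', ∃ a ∈ insert v S, ∃ b ∈ insert v S,
      ¬ (avoidGraph c (insert v S) x' y').Reachable a b := by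
  have hP : ∀ u ∈ S, c v u ≠ x → c v u ≠ y → c v u = c v u₀ := fun u hu hx hy => by
    by_cases h : (avoidGraph c S x y).Reachable u u₀
    · rw [color_eq_of_not_reachable hc hv hu hu₁ ⟨hx, hy⟩ hvu₁ fun h' => h₀₁ (h.symm.trans h'),
        color_eq_of_not_reachable hc hv hu₀ hu₁ hvu₀ hvu₁ h₀₁]
    · exact color_eq_of_not_reachable hc hv hu hu₀ ⟨hx, hy⟩ hvu₀ h
  have hav : a ≠ v := by rintro rfl; exact hv ha
  have isolate : ∀ x' y', (∀ u ∈ S, c v u = x' ∨ c v u = y') →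
      ∃ x' y', ∃ a ∈ insert v S, ∃ b ∈ insert v S,
        ¬ (avoidGraph c (insert v S) x' y').Reachable a b := fun x' y' h =>
    ⟨x', y', v, mem_insert_self v S, a, mem_insert_of_mem ha,
      not_reachable_of_forall_color_eq_or_eq hc (fun w hw hwv =>
        h w ((mem_insert.1 hw).resolve_left hwv)) hav⟩
  by_cases h₁ : ∀ u ∈ S, c v u = y ∨ c v u = c v u₀
  · exact isolate _ _ h₁
  by_cases h₂ : ∀ u ∈ S, c v u = x ∨ c v u = c v u₀
  · exact isolate _ _ h₂
  push Not at h₁ h₂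
  obtain ⟨u, hu, huy, hu₀'⟩ := h₁
  obtain ⟨w, hw, hwx, hw₀'⟩ := h₂
  have hux : c v u = x := by by_contra h; exact hu₀' (hP u hu h huy)
  have hwy : c v w = y := by by_contra h; exact hw₀' (hP w hw hwx h)
  obtain ⟨t, ht, htv⟩ := exists_forall_reachable_color_eq_or_eq hc hv ha hb hab
    (hux ▸ huy) hu hux hw hwy
  exact ⟨x, y, t, mem_insert_of_mem ht, v, mem_insert_self v S,
    not_reachable_insert_of_forall hc hv ht htv⟩

/-- Gallai's theorem in reduced form. -/
theorem exists_not_reachable (hc : IsGallai c) (S : Finset V) (hS : 2 ≤ S.card) :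
    ∃ x y, ∃ a ∈ S, ∃ b ∈ S, ¬ (avoidGraph c S x y).Reachable a b := by
  induction S using Finset.induction_on with
  | empty => simp at hS
  | insert v S hv ih =>
    rw [card_insert_of_notMem hv] at hS
    by_cases hS₂ : 2 ≤ S.card
    swap
    · obtain ⟨u, rfl⟩ := card_eq_one.1 (by omega : S.card = 1)
      have huv : u ≠ v := by rintro rfl; simp at hv
      refine ⟨c v u, c v u, v, mem_insert_self _ _, u, by simp, ?_⟩
      exact not_reachable_of_forall_color_eq_or_eq hc (by simp) huv
    obtain ⟨x, y, a, ha, b, hb, hab⟩ := ih hS₂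
    by_cases hone : ∃ u₀, ∀ u ∈ S, c v u ≠ x → c v u ≠ y → (avoidGraph c S x y).Reachable u₀ u
    · obtain ⟨u₀, hu₀⟩ := hone
      obtain ⟨t, ht, h⟩ := exists_not_reachable_insert_of_forall_reachable hc hv ha hb hab hu₀
      exact ⟨x, y, v, mem_insert_self v S, t, mem_insert_of_mem ht, h⟩
    push Not at hone
    obtain ⟨u₀, hu₀, hx₀, hy₀, -⟩ := hone a
    obtain ⟨u₁, hu₁, hx₁, hy₁, h₀₁⟩ := hone u₀
    exact exists_not_reachable_insert_of_not_reachable hc hv ha hb hab hu₀ hu₁ ⟨hx₀, hy₀⟩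
      ⟨hx₁, hy₁⟩ h₀₁

end GallaiCut

variable {V β : Type*} [DecidableEq V] [DecidableEq β] {c : V → V → β} {S T : Finset V} {b : β}

theorem mem_colorsOn : b ∈ colorsOn c S ↔ ∃ a ∈ S, ∃ a' ∈ S, a ≠ a' ∧ c a a' = b := by
  simp [colorsOn, and_assoc]

theorem colorsOn_mono (h : S ⊆ T) : colorsOn c S ⊆ colorsOn c T := by
  intro b hb
  obtain ⟨a, ha, a', ha', hne, rfl⟩ := mem_colorsOn.1 hb
  exact mem_colorsOn.2 ⟨a, h ha, a', h ha', hne, rfl⟩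

theorem colorsOn_singleton (v : V) : colorsOn c {v} = ∅ := by
  ext b
  simp only [mem_colorsOn, mem_singleton, notMem_empty, iff_false]
  rintro ⟨a, rfl, a', rfl, hne, -⟩
  exact hne rfl

def IsStarColor (c : V → V → β) (S : Finset V) (b : β) : Prop :=
  ∃ v, ∀ a ∈ S, ∀ a' ∈ S, a ≠ a' → c a a' = b → a = v ∨ a' = v

theorem colorsOn_erase_subset {v : V}
    (hv : ∀ a ∈ S, ∀ a' ∈ S, a ≠ a' → c a a' = b → a = v ∨ a' = v) :
    colorsOn c (S.erase v) ⊆ (colorsOn c S).erase b := by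
  intro z hz
  obtain ⟨a, ha, a', ha', hne, rfl⟩ := mem_colorsOn.1 hz
  refine mem_erase.2 ⟨fun hb' => ?_, colorsOn_mono (erase_subset v S) hz⟩
  rcases hv a (mem_of_mem_erase ha) a' (mem_of_mem_erase ha') hne hb' with rfl | rfl
  exacts [ne_of_mem_erase ha rfl, ne_of_mem_erase ha' rfl]

open Classical in
/-- Zero on absent colours, so that `weight` may be summed over any superset of `colorsOn c S`. -/
noncomputable def colorWeight (c : V → V → β) (S : Finset V) (b : β) : ℕ :=
  if b ∉ colorsOn c S then 0 else if IsStarColor c S b then 1 else 2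

noncomputable def weight (c : V → V → β) (S : Finset V) : ℕ :=
  ∑ b ∈ colorsOn c S, colorWeight c S b

theorem colorWeight_le_two : colorWeight c S b ≤ 2 := by
  unfold colorWeight; split_ifs <;> omega

theorem one_le_colorWeight (hb : b ∈ colorsOn c S) : 1 ≤ colorWeight c S b := by
  unfold colorWeight; split_ifs <;> omega

theorem colorWeight_eq_zero (hb : b ∉ colorsOn c S) : colorWeight c S b = 0 := by
  simp [colorWeight, hb]

theorem colorWeight_le_one (h : IsStarColor c S b) : colorWeight c S b ≤ 1 := by
  unfold colorWeight; split_ifs <;> omega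

theorem colorWeight_eq_two (hb : b ∈ colorsOn c S) (h : ¬ IsStarColor c S b) :
    colorWeight c S b = 2 := by
  simp [colorWeight, hb, h]

theorem weight_singleton (v : V) : weight c {v} = 0 := by
  simp [weight, colorsOn_singleton]

theorem weight_eq_two_mul_card (h : ∀ b ∈ colorsOn c S, ¬ IsStarColor c S b) :
    weight c S = 2 * (colorsOn c S).card := by
  rw [weight, sum_congr rfl fun b hb => colorWeight_eq_two hb (h b hb), sum_const, smul_eq_mul,
    mul_comm]

section WeightBound

variable {ι : Type*} [DecidableEq ι] {f : V → ι} {x y : β}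

theorem crossColors_subset : crossColors c f S ⊆ colorsOn c S := by
  intro b hb
  obtain ⟨a, ha, a', ha', hne, rfl⟩ := mem_crossColors.1 hb
  exact mem_colorsOn.2 ⟨a, ha, a', ha', fun h => hne (congrArg f h), rfl⟩

theorem mem_colorsOn_fiber {a a' : V} (ha : a ∈ S) (ha' : a' ∈ S) (hne : a ≠ a')
    (hf : f a = f a') : c a a' ∈ colorsOn c {u ∈ S | f u = f a} :=
  mem_colorsOn.2 ⟨a, by simp [ha], a', by simp [ha', hf], hne, rfl⟩

theorem isStarColor_of_isStarColor_fiber {i : ι} (hb : b ∉ crossColors c f S)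
    (hi : ∀ j ∈ S.image f, j ≠ i → b ∉ colorsOn c {u ∈ S | f u = j})
    (h : IsStarColor c {u ∈ S | f u = i} b) : IsStarColor c S b := by
  obtain ⟨v, hv⟩ := h
  refine ⟨v, fun u hu u' hu' hne hb' => hv u ?_ u' ?_ hne hb'⟩
  all_goals
    have hf : f u = f u' := by
      by_contra hf
      exact hb (mem_crossColors.2 ⟨u, hu, u', hu', hf, hb'⟩)
    have hfu : f u = i := by
      by_contra hfu
      exact hi (f u) (mem_image_of_mem f hu) hfu (hb' ▸ mem_colorsOn_fiber hu hu' hne hf)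
    simp [hu, hu', hfu, ← hf]

theorem colorWeight_le_sum_fibers (hb : b ∉ crossColors c f S) :
    colorWeight c S b ≤ ∑ i ∈ S.image f, colorWeight c {u ∈ S | f u = i} b := by
  by_cases hbS : b ∈ colorsOn c S
  swap
  · simp [colorWeight_eq_zero hbS]
  obtain ⟨a, ha, a', ha', hne, rfl⟩ := mem_colorsOn.1 hbS
  have hfa : f a ∈ S.image f := mem_image_of_mem f ha
  have hbF : c a a' ∈ colorsOn c {u ∈ S | f u = f a} := mem_colorsOn_fiber ha ha' hne <| by
    by_contra hf
    exact hb (mem_crossColors.2 ⟨a, ha, a', ha', hf, rfl⟩)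
  have hone := one_le_colorWeight hbF
  by_cases hstar : IsStarColor c S (c a a')
  · calc colorWeight c S (c a a') ≤ 1 := colorWeight_le_one hstar
      _ ≤ _ := hone
      _ ≤ _ := single_le_sum (f := fun i => colorWeight c {u ∈ S | f u = i} (c a a'))
        (fun _ _ => Nat.zero_le _) hfa
  by_cases hother : ∃ j ∈ S.image f, j ≠ f a ∧ c a a' ∈ colorsOn c {u ∈ S | f u = j}
  · obtain ⟨j, hj, hja, hbj⟩ := hother
    calc colorWeight c S (c a a') ≤ 1 + 1 := colorWeight_le_two
      _ ≤ _ := add_le_add hone (one_le_colorWeight hbj)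
      _ ≤ _ := add_le_sum (f := fun i => colorWeight c {u ∈ S | f u = i} (c a a'))
        (fun _ _ => Nat.zero_le _) hfa hj (Ne.symm hja)
  push Not at hother
  have hstar' : ¬ IsStarColor c {u ∈ S | f u = f a} (c a a') := fun h =>
    hstar (isStarColor_of_isStarColor_fiber hb hother h)
  calc colorWeight c S (c a a') ≤ 2 := colorWeight_le_two
    _ = _ := (colorWeight_eq_two hbF hstar').symm
    _ ≤ _ := single_le_sum (f := fun i => colorWeight c {u ∈ S | f u = i} (c a a'))
        (fun _ _ => Nat.zero_le _) hfa

theorem colorWeight_le_sum_fibers_add_one {u : V}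
    (hu : ∀ a ∈ S, ∀ a' ∈ S, f a ≠ f a' → c a a' = b → a = u ∨ a' = u) :
    colorWeight c S b ≤ ∑ i ∈ S.image f, colorWeight c {u ∈ S | f u = i} b + 1 := by
  by_cases hin : ∃ i ∈ S.image f, b ∈ colorsOn c {u ∈ S | f u = i}
  · obtain ⟨i, hi, hbi⟩ := hin
    have := single_le_sum (f := fun i => colorWeight c {u ∈ S | f u = i} b)
      (fun _ _ => Nat.zero_le _) hi
    have := one_le_colorWeight hbi
    have := colorWeight_le_two (c := c) (S := S) (b := b)
    omega
  have hstar : IsStarColor c S b := by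
    refine ⟨u, fun a ha a' ha' hne h => hu a ha a' ha' (fun hf => hin ?_) h⟩
    exact ⟨f a, mem_image_of_mem f ha, h ▸ mem_colorsOn_fiber ha ha' hne hf⟩
  exact (colorWeight_le_one hstar).trans (Nat.le_add_left 1 _)

theorem weight_le_sum_fibers_add (e : ℕ)
    (he : ∀ b ∈ crossColors c f S,
      colorWeight c S b ≤ ∑ i ∈ S.image f, colorWeight c {u ∈ S | f u = i} b + e) :
    weight c S ≤ ∑ i ∈ S.image f, weight c {u ∈ S | f u = i} + e * (crossColors c f S).card := by
  have hfiber : ∀ i, weight c {u ∈ S | f u = i} =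
      ∑ b ∈ colorsOn c S, colorWeight c {u ∈ S | f u = i} b := fun i =>
    sum_subset (colorsOn_mono (filter_subset _ S)) fun b _ hb => colorWeight_eq_zero hb
  have hcross : e * (crossColors c f S).card =
      ∑ b ∈ colorsOn c S, if b ∈ crossColors c f S then e else 0 := by
    rw [sum_ite_mem, inter_eq_right.2 crossColors_subset, sum_const, smul_eq_mul, mul_comm]
  rw [sum_congr rfl fun i _ => hfiber i, sum_comm, hcross, ← sum_add_distrib]
  refine sum_le_sum fun b _ => ?_
  split_ifs with hb
  · exact he b hb
  · exact colorWeight_le_sum_fibers hb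

theorem two_mul_sum_weight_fibers_add_le (d : ℕ)
    (h : ∀ i ∈ S.image f, 2 * weight c {u ∈ S | f u = i} + d ≤ 3 * {u ∈ S | f u = i}.card) :
    2 * ∑ i ∈ S.image f, weight c {u ∈ S | f u = i} + d * (S.image f).card ≤ 3 * S.card := by
  rw [card_eq_sum_card_image f S, mul_sum, mul_sum, card_eq_sum_ones, mul_sum, ← sum_add_distrib]
  exact sum_le_sum fun i hi => by simpa using h i hi

theorem two_mul_weight_fiber_add_three_le
    (IH : ∀ T ⊂ S, 2 ≤ T.card → 2 * weight c T + 4 ≤ 3 * T.card) {i : ι}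
    (hm : 2 ≤ (S.image f).card) (hi : i ∈ S.image f) :
    2 * weight c {u ∈ S | f u = i} + 3 ≤ 3 * {u ∈ S | f u = i}.card := by
  by_cases h2 : 2 ≤ {u ∈ S | f u = i}.card
  · have := IH _ (fiber_ssubset hm) h2
    omega
  obtain ⟨v, hv⟩ := exists_fiber_eq_singleton hi (by omega)
  simp [hv, weight_singleton]

theorem two_mul_weight_add_four_le_of_two_parts
    (IH : ∀ T ⊂ S, 2 ≤ T.card → 2 * weight c T + 4 ≤ 3 * T.card)
    (hm : (S.image f).card = 2) (hcross : (crossColors c f S).card ≤ 1) :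
    2 * weight c S + 4 ≤ 3 * S.card := by
  by_cases hbig : ∀ i ∈ S.image f, 2 ≤ {u ∈ S | f u = i}.card
  · have h₁ := weight_le_sum_fibers_add (c := c) (S := S) (f := f) 2 fun _ _ =>
      le_add_left colorWeight_le_two
    have h₂ := two_mul_sum_weight_fibers_add_le 4 fun i hi =>
      IH _ (fiber_ssubset hm.ge) (hbig i hi)
    omega
  -- a singleton fiber `{u}`: every crossing edge passes through `u`
  push Not at hbig
  obtain ⟨i, hi, hlt⟩ := hbig
  obtain ⟨u, hu⟩ := exists_fiber_eq_singleton hi hlt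
  have hmem : ∀ v ∈ S, f v = i → v = u := fun v hv hvi => by
    simpa [hu] using (mem_filter.2 ⟨hv, hvi⟩ : v ∈ {v ∈ S | f v = i})
  have htouch : ∀ b, ∀ v ∈ S, ∀ v' ∈ S, f v ≠ f v' → c v v' = b → v = u ∨ v' = u :=
    fun b v hv v' hv' hne _ =>
      (eq_or_eq_of_card_image_eq_two hm hi hv hv' hne).imp (hmem v hv) (hmem v' hv')
  have h₁ := weight_le_sum_fibers_add (c := c) (S := S) (f := f) 1 fun b _ =>
    colorWeight_le_sum_fibers_add_one (htouch b)
  have h₂ := two_mul_sum_weight_fibers_add_le 3 fun i hi =>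
    two_mul_weight_fiber_add_three_le IH hm.ge hi
  omega

theorem two_mul_weight_add_four_le_of_four_le_parts
    (IH : ∀ T ⊂ S, 2 ≤ T.card → 2 * weight c T + 4 ≤ 3 * T.card)
    (hm : 4 ≤ (S.image f).card) (hcross : (crossColors c f S).card ≤ 2) :
    2 * weight c S + 4 ≤ 3 * S.card := by
  have h₁ := weight_le_sum_fibers_add (c := c) (S := S) (f := f) 2 fun _ _ =>
    le_add_left colorWeight_le_two
  have h₂ := two_mul_sum_weight_fibers_add_le 3 fun i hi =>
    two_mul_weight_fiber_add_three_le IH (by omega : 2 ≤ (S.image f).card) hi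
  omega

/-- Splitting off the class of `q` gives a two-part labeling with a single crossing colour. -/
theorem two_mul_weight_add_four_le_of_monochromatic_class (hc : IsGallai c)
    (IH : ∀ T ⊂ S, 2 ≤ T.card → 2 * weight c T + 4 ≤ 3 * T.card) {q r t : V}
    (hq : q ∈ S) (hr : r ∈ S) (ht : t ∈ S)
    (hqr : ¬ (avoidGraph c S x y).Reachable q r) (hqt : ¬ (avoidGraph c S x y).Reachable q t)
    (hcol : c q r = c q t)
    (hcover : ∀ s ∈ S, (avoidGraph c S x y).Reachable q s ∨ (avoidGraph c S x y).Reachable r s ∨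
      (avoidGraph c S x y).Reachable t s) :
    2 * weight c S + 4 ≤ 3 * S.card := by
  classical
  set g : V → Bool := fun s => decide ((avoidGraph c S x y).Reachable q s)
  have hm : (S.image g).card = 2 := le_antisymm ((card_le_univ _).trans_eq rfl)
    (one_lt_card.2 ⟨true, mem_image.2 ⟨q, hq, by simp [g]⟩, false,
      mem_image.2 ⟨r, hr, by simp [g, hqr]⟩, by decide⟩)
  have hcross : ∀ b ∈ crossColors c g S, b = c q r := fun b hb => by
    obtain ⟨s, hs, s', hs', hne, rfl⟩ := mem_crossColors.1 hb
    by_cases hqs : (avoidGraph c S x y).Reachable q s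
    · exact color_eq_of_monochromatic_class hc hq hr ht hqr hqt hcol hcover hs' hqs
        (by simpa [g, hqs] using hne)
    · rw [hc.1]
      exact color_eq_of_monochromatic_class hc hq hr ht hqr hqt hcol hcover hs
        (by simpa [g, hqs] using hne) hqs
  exact two_mul_weight_add_four_le_of_two_parts IH hm
    (card_le_one.2 fun b hb b' hb' => (hcross b hb).trans (hcross b' hb').symm)

theorem two_mul_weight_add_four_le_of_three_classes (hc : IsGallai c)
    (IH : ∀ T ⊂ S, 2 ≤ T.card → 2 * weight c T + 4 ≤ 3 * T.card) {a b t : V}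
    (ha : a ∈ S) (hb : b ∈ S) (ht : t ∈ S) (hab : ¬ (avoidGraph c S x y).Reachable a b)
    (hat : ¬ (avoidGraph c S x y).Reachable a t) (hbt : ¬ (avoidGraph c S x y).Reachable b t)
    (hcover : ∀ s ∈ S, (avoidGraph c S x y).Reachable a s ∨ (avoidGraph c S x y).Reachable b s ∨
      (avoidGraph c S x y).Reachable t s) :
    2 * weight c S + 4 ≤ 3 * S.card := by
  by_cases h₁ : c a b = c a t
  · exact two_mul_weight_add_four_le_of_monochromatic_class hc IH ha hb ht hab hat h₁ hcover
  by_cases h₂ : c a b = c b t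
  · exact two_mul_weight_add_four_le_of_monochromatic_class hc IH hb ha ht (fun h => hab h.symm)
      hbt (by rw [hc.1, h₂]) fun s hs => by have := hcover s hs; tauto
  have h₃ := hc.eq_of_ne_of_ne_s5 (by rintro rfl; exact hab .rfl) (by rintro rfl; exact hat .rfl)
    (by rintro rfl; exact hbt .rfl) h₁ h₂
  exact two_mul_weight_add_four_le_of_monochromatic_class hc IH ht ha hb (fun h => hat h.symm)
    (fun h => hbt h.symm) (by rw [hc.1, h₃, hc.1]) fun s hs => by have := hcover s hs; tauto

theorem two_mul_weight_add_four_le_of_four_classes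
    (IH : ∀ T ⊂ S, 2 ≤ T.card → 2 * weight c T + 4 ≤ 3 * T.card) {a b t s : V}
    (ha : a ∈ S) (hb : b ∈ S) (ht : t ∈ S) (hs : s ∈ S)
    (hab : ¬ (avoidGraph c S x y).Reachable a b) (hat : ¬ (avoidGraph c S x y).Reachable a t)
    (has : ¬ (avoidGraph c S x y).Reachable a s) (hbt : ¬ (avoidGraph c S x y).Reachable b t)
    (hbs : ¬ (avoidGraph c S x y).Reachable b s) (hts : ¬ (avoidGraph c S x y).Reachable t s) :
    2 * weight c S + 4 ≤ 3 * S.card := by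
  classical
  set κ := (avoidGraph c S x y).connectedComponentMk
  refine two_mul_weight_add_four_le_of_four_le_parts (f := κ) IH ?_ ?_
  · have hsub : {κ a, κ b, κ t, κ s} ⊆ S.image κ := by
      simp only [insert_subset_iff, singleton_subset_iff]
      exact ⟨mem_image_of_mem _ ha, mem_image_of_mem _ hb, mem_image_of_mem _ ht,
        mem_image_of_mem _ hs⟩
    refine le_trans ?_ (card_le_card hsub)
    rw [card_insert_of_notMem, card_insert_of_notMem, card_pair] <;>
      simp [κ, SimpleGraph.ConnectedComponent.eq, *]
  · refine (card_le_card fun z hz => ?_).trans (card_le_two (a := x) (b := y))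
    obtain ⟨u, hu, w, hw, hne, rfl⟩ := mem_crossColors.1 hz
    simpa using color_eq_or_eq_of_not_reachable hu hw
      (mt SimpleGraph.ConnectedComponent.sound hne)

theorem two_mul_weight_add_four_le (hc : IsGallai c) (S : Finset V) (hS : 2 ≤ S.card) :
    2 * weight c S + 4 ≤ 3 * S.card := by
  induction S using Finset.strongInduction with
  | H S IH =>
  replace IH : ∀ T ⊂ S, 2 ≤ T.card → 2 * weight c T + 4 ≤ 3 * T.card := IH
  obtain ⟨x, y, a, ha, b, hb, hab⟩ := exists_not_reachable hc S hS
  set G := avoidGraph c S x y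
  by_cases h₃ : ∃ t ∈ S, ¬ G.Reachable a t ∧ ¬ G.Reachable b t
  swap
  · push Not at h₃
    exact two_mul_weight_add_four_le_of_monochromatic_class hc IH ha hb hb hab hab rfl
      fun s hs => (em (G.Reachable a s)).imp_right fun h => .inl (h₃ s hs h)
  obtain ⟨t, ht, hat, hbt⟩ := h₃
  by_cases h₄ : ∃ s ∈ S, ¬ G.Reachable a s ∧ ¬ G.Reachable b s ∧ ¬ G.Reachable t s
  · obtain ⟨s, hs, has, hbs, hts⟩ := h₄
    exact two_mul_weight_add_four_le_of_four_classes IH ha hb ht hs hab hat has hbt hbs hts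
  push Not at h₄
  refine two_mul_weight_add_four_le_of_three_classes hc IH ha hb ht hab hat hbt fun s hs => ?_
  by_contra! h
  exact h.2.2 (h₄ s hs h.1 h.2.1)

end WeightBound

theorem exists_isStarColor (hc : IsGallai c) (hS : 9 ≤ S.card)
    (h : S.card ≤ (colorsOn c S).card + 3) : ∃ b ∈ colorsOn c S, IsStarColor c S b := by
  by_contra! hno
  have := two_mul_weight_add_four_le hc S (by omega)
  rw [weight_eq_two_mul_card hno] at this
  omega

theorem exists_mem_card_colorsOn_erase_add_three_le (hc : IsGallai c) (hS : 9 ≤ S.card)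
    (h : (colorsOn c S).card + 3 ≤ S.card) :
    ∃ v ∈ S, (colorsOn c (S.erase v)).card + 3 ≤ (S.erase v).card := by
  by_cases hslack : (colorsOn c S).card + 4 ≤ S.card
  · obtain ⟨v, hv⟩ := card_pos.1 (by omega : 0 < S.card)
    have := card_le_card (colorsOn_mono (c := c) (erase_subset v S))
    refine ⟨v, hv, ?_⟩
    rw [card_erase_of_mem hv]
    omega
  -- deleting the centre of a star colour loses that colour
  obtain ⟨b, hb, v, hv⟩ := exists_isStarColor hc hS (by omega)
  obtain ⟨a, ha, a', ha', hne, hab⟩ := mem_colorsOn.1 hb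
  have hvS : v ∈ S := (hv a ha a' ha' hne hab).elim (· ▸ ha) (· ▸ ha')
  have := card_le_card (colorsOn_erase_subset hv)
  rw [card_erase_of_mem hb] at this
  have := card_pos.2 ⟨b, hb⟩
  refine ⟨v, hvS, ?_⟩
  rw [card_erase_of_mem hvS]
  omega

theorem exists_subset_card_eq (hc : IsGallai c) {m : ℕ} (hm : 8 ≤ m) (S : Finset V)
    (hS : m ≤ S.card) (h : (colorsOn c S).card + 3 ≤ S.card) :
    ∃ T ⊆ S, T.card = m ∧ (colorsOn c T).card + 3 ≤ m := by
  induction S using Finset.strongInduction with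
  | H S IH =>
  rcases hS.eq_or_lt with hSm | hSm
  · exact ⟨S, Subset.refl S, hSm.symm, hSm ▸ h⟩
  obtain ⟨v, hv, hv'⟩ := exists_mem_card_colorsOn_erase_add_three_le hc (by omega) h
  obtain ⟨T, hT, hTm, hTc⟩ :=
    IH _ (erase_ssubset hv) (by rw [card_erase_of_mem hv]; omega) hv'
  exact ⟨T, hT.trans (erase_subset v S), hTm, hTc⟩

def cappedMinColoring {k : ℕ} (hk : 0 < k) (n : ℕ) : Fin n → Fin n → Fin k :=
  fun i j => ⟨min (min i j) (k - 1), by omega⟩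

theorem isGallai_cappedMinColoring {k : ℕ} (hk : 0 < k) (n : ℕ) :
    IsGallai (cappedMinColoring hk n) := by
  refine ⟨fun a b => ?_, fun a b d _ _ _ h => ?_⟩
  · simp [cappedMinColoring, min_comm]
  · simp only [cappedMinColoring, ne_eq, Fin.mk.injEq] at h
    omega

theorem card_le_card_colorsOn_cappedMinColoring_add_two {k n : ℕ} (hk : 0 < k) (hn : n ≤ k + 2)
    (S : Finset (Fin n)) : S.card ≤ (colorsOn (cappedMinColoring hk n) S).card + 2 := by
  rcases S.eq_empty_or_nonempty with rfl | hne
  · simp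
  set M := S.max' hne
  have hM : M ∈ S := S.max'_mem hne
  have hlt : ∀ v ∈ S.erase M, v < M := fun v hv =>
    lt_of_le_of_ne (S.le_max' v (mem_of_mem_erase hv)) (ne_of_mem_erase hv)
  -- below the maximum every vertex except possibly `k` names a colour of its own
  set T := {v ∈ S.erase M | v.val < k}
  have hT : S.card ≤ T.card + 2 := by
    have hrest : {v ∈ S.erase M | ¬ v.val < k}.card ≤ 1 := card_le_one.2 fun v hv w hw => by
      simp only [mem_filter] at hv hw
      have := hlt v hv.1
      have := hlt w hw.1
      have := M.isLt
      exact Fin.ext (by omega)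
    have := card_filter_add_card_filter_not (s := S.erase M) (fun v => v.val < k)
    rw [card_erase_of_mem hM] at this
    change T.card + _ = _ at this
    omega
  have hval : ∀ v ∈ T, (cappedMinColoring hk n v M).val = v.val := fun v hv => by
    simp only [T, mem_filter] at hv
    have := hlt v hv.1
    simp only [cappedMinColoring]
    omega
  have himage : T.image (cappedMinColoring hk n · M) ⊆ colorsOn (cappedMinColoring hk n) S :=
    fun z hz => by
      obtain ⟨v, hv, rfl⟩ := mem_image.1 hz
      have hv' := (mem_filter.1 hv).1
      exact mem_colorsOn.2 ⟨v, mem_of_mem_erase hv', M, hM, ne_of_mem_erase hv', rfl⟩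
  have hinj : Set.InjOn (cappedMinColoring hk n · M) T := fun v hv w hw h =>
    Fin.ext ((hval v hv).symm.trans ((congrArg Fin.val h).trans (hval w hw)))
  have := card_le_card himage
  rw [card_image_of_injOn hinj] at this
  omega

end Gallai

open Gallai in
theorem gallaiNum_q_eq_p_sub_three (p k : ℕ) (hp : 8 ≤ p) (hk : p - 3 ≤ k) :
    gallaiNum k (p - 3) p = k + 3 ∧
    (∀ c : Fin (k + 3) → Fin (k + 3) → Fin k, IsGallai c →
      ∃ S : Finset (Fin (k + 3)), S.card = p ∧ (colorsOn c S).card ≤ p - 3) ∧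
    (∃ c : Fin (k + 2) → Fin (k + 2) → Fin k, IsGallai c ∧
      ∀ S : Finset (Fin (k + 2)), S.card = p → p - 2 ≤ (colorsOn c S).card) := by
  have hk₀ : 0 < k := by omega
  have hupper : ∀ c : Fin (k + 3) → Fin (k + 3) → Fin k, IsGallai c →
      ∃ S : Finset (Fin (k + 3)), S.card = p ∧ (colorsOn c S).card ≤ p - 3 := fun c hc => by
    have := card_le_univ (colorsOn c univ)
    simp only [Fintype.card_fin] at this
    obtain ⟨T, -, hT, hTc⟩ := exists_subset_card_eq hc hp univ (by simp; omega) (by simp; omega)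
    exact ⟨T, hT, by omega⟩
  refine ⟨le_antisymm (Nat.sInf_le ⟨by omega, hupper⟩) ?_, hupper,
    cappedMinColoring hk₀ (k + 2), isGallai_cappedMinColoring hk₀ _, fun S hS => ?_⟩
  · refine le_csInf ⟨k + 3, by omega, hupper⟩ fun n ⟨_, hn⟩ => ?_
    by_contra! hlt
    obtain ⟨S, hS, hSc⟩ := hn _ (isGallai_cappedMinColoring hk₀ n)
    have := card_le_card_colorsOn_cappedMinColoring_add_two hk₀ (by omega) S
    omega
  · have := card_le_card_colorsOn_cappedMinColoring_add_two hk₀ le_rfl S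
    omega
end

section
/- In any Gallai-coloring of a complete graph on at least two vertices, there is a connected monochromatic spanning subgraph; that is, there exists a color i such that the graph on the full vertex set whose edges are exactly the edges colored i is connected. -/
open Finset

/-! Induction on the vertex set. Suppose the edges of color `i` connect `s`, and add a vertex `a`.
If some edge from `a` into `s` has color `i`, color `i` still connects `s ∪ {a}`. Otherwise, for
every `i`-edge `xy` of `s` the triangle `axy` is not rainbow, so `c a x = c a y`; by connectivity
`a` sends a single color `j` to all of `s`, and the star at `a` connects `s ∪ {a}` in color `j`. -/

namespace SimpleGraph

variable {V : Type*} {G : SimpleGraph V}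

theorem Reachable.eq_of_forall_adj_eq {β : Type*} {f : V → β}
    (hf : ∀ x y, G.Adj x y → f x = f y) {u v : V} (h : G.Reachable u v) : f u = f v := by
  obtain ⟨p⟩ := h
  induction p with
  | nil => rfl
  | cons ha _ ih => exact (hf _ _ ha).trans ih

theorem connected_induce_insert_of_adj {s : Set V} {a u : V} (hs : (G.induce s).Connected)
    (hu : u ∈ s) (ha : G.Adj a u) : (G.induce (insert a s)).Connected := by
  have hsingleton : (G.induce {a}).Preconnected := by
    rw [induce_singleton_eq_top]
    exact connected_top.preconnected
  exact connected_induce_union hsingleton hs.preconnected rfl hu ha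

theorem connected_induce_insert_of_forall_adj {s : Set V} {a : V} (ha : ∀ u ∈ s, G.Adj a u) :
    (G.induce (insert a s)).Connected := by
  rw [connected_iff_exists_forall_reachable]
  refine ⟨⟨a, s.mem_insert a⟩, ?_⟩
  rintro ⟨v, rfl | hv⟩
  · rfl
  · exact Adj.reachable (ha v hv)

end SimpleGraph

open SimpleGraph

def colorGraph {V β : Type*} (c : V → V → β) (i : β) : SimpleGraph V :=
  SimpleGraph.fromRel fun a b => c a b = i

namespace IsGallai

variable {V β : Type*} {c : V → V → β}

theorem colorGraph_adj (h : IsGallai c) {i : β} {a b : V} :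
    (colorGraph c i).Adj a b ↔ a ≠ b ∧ c a b = i := by
  rw [colorGraph, fromRel_adj, h.1 b a, or_self]

theorem apply_eq_apply_of_colorGraph_adj (h : IsGallai c) {i : β} {v x y : V}
    (hadj : (colorGraph c i).Adj x y) (hvx : v ≠ x) (hvy : v ≠ y) (hx : c v x ≠ i) (hy : c v y ≠ i) :
    c v x = c v y := by
  obtain ⟨hxy, rfl⟩ := h.colorGraph_adj.1 hadj
  by_contra hne
  exact h.2 v x y hvx hvy hxy ⟨hne, hx, hy⟩

theorem exists_connected_induce_insert (h : IsGallai c) {s : Set V} {i : β} {a : V}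
    (hs : ((colorGraph c i).induce s).Connected) (ha : a ∉ s) :
    ∃ j, ((colorGraph c j).induce (insert a s)).Connected := by
  have hne : ∀ u ∈ s, a ≠ u := fun u hu hau => ha (hau ▸ hu)
  by_cases hi : ∃ u ∈ s, c a u = i
  · obtain ⟨u, hu, hau⟩ := hi
    exact ⟨i, connected_induce_insert_of_adj hs hu (h.colorGraph_adj.2 ⟨hne u hu, hau⟩)⟩
  push Not at hi
  obtain ⟨⟨u₀, hu₀⟩⟩ := hs.nonempty
  have hconst : ∀ u ∈ s, c a u = c a u₀ := fun u hu =>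
    (hs.preconnected ⟨u, hu⟩ ⟨u₀, hu₀⟩).eq_of_forall_adj_eq (f := fun x : s => c a x)
      fun x y hxy => h.apply_eq_apply_of_colorGraph_adj hxy (hne x x.2) (hne y y.2)
        (hi x x.2) (hi y y.2)
  exact ⟨c a u₀, connected_induce_insert_of_forall_adj fun u hu =>
    h.colorGraph_adj.2 ⟨hne u hu, hconst u hu⟩⟩

theorem exists_connected_induce (h : IsGallai c) {s : Finset V} (hs : s.Nonempty) :
    ∃ i, ((colorGraph c i).induce (s : Set V)).Connected := by
  induction hs using Finset.Nonempty.cons_induction with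
  | singleton a =>
    refine ⟨c a a, ?_⟩
    rw [coe_singleton, induce_singleton_eq_top]
    exact connected_top
  | cons a s ha _ ih =>
    obtain ⟨i, hi⟩ := ih
    rw [coe_cons]
    exact h.exists_connected_induce_insert hi (mem_coe.not.2 ha)

theorem exists_colorGraph_connected [Finite V] [Nonempty V] (h : IsGallai c) :
    ∃ i, (colorGraph c i).Connected := by
  have := Fintype.ofFinite V
  obtain ⟨i, hi⟩ := h.exists_connected_induce univ_nonempty
  rw [coe_univ] at hi
  exact ⟨i, (induceUnivIso _).connected_iff.1 hi⟩

end IsGallai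

theorem gallai_connected_monochromatic (n : ℕ) (hn : 2 ≤ n) (β : Type)
    (c : Fin n → Fin n → β) (h : IsGallai c) :
    ∃ i : β, (SimpleGraph.fromRel fun a b => c a b = i).Connected := by
  have : Nonempty (Fin n) := ⟨⟨0, by omega⟩⟩
  exact h.exists_colorGraph_connected
end

section
/- Let n ≥ 4 and consider any edge-coloring of the complete graph K_n such that for every vertex v and every color i the number of edges of color i incident with v is at most n/4. Then the coloring contains a rainbow triangle, i.e., three vertices whose three pairwise connecting edges receive three distinct colors. -/
open Finset

theorem rainbow_triangle_of_small_color_degree (n : ℕ) (hn : 4 ≤ n) (β : Type)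
    [DecidableEq β] (c : Fin n → Fin n → β) (hsym : ∀ a b, c a b = c b a)
    (hdeg : ∀ v : Fin n, ∀ i : β,
      4 * (Finset.univ.filter fun u => u ≠ v ∧ c v u = i).card ≤ n) :
    ∃ a b d : Fin n, a ≠ b ∧ a ≠ d ∧ b ≠ d ∧
      c a b ≠ c a d ∧ c a b ≠ c b d ∧ c a d ≠ c b d := by
  by_contra hcon
  push_neg at hcon
  have nr : ∀ a b d : Fin n, a ≠ b → a ≠ d → b ≠ d →
      c a b = c a d ∨ c a b = c b d ∨ c a d = c b d := by
    intro a b d h1 h2 h3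
    by_cases e1 : c a b = c a d
    · exact Or.inl e1
    by_cases e2 : c a b = c b d
    · exact Or.inr (Or.inl e2)
    exact Or.inr (Or.inr (hcon a b d h1 h2 h3 e1 e2))
  set deg : Fin n → β → ℕ :=
    fun v i => (univ.filter fun x => x ≠ v ∧ c v x = i).card with hdegdef
  have hdeg_eq : ∀ (a : Fin n) (i : β),
      deg a i = (univ.filter fun x => x ≠ a ∧ c a x = i).card := fun a i => rfl
  -- choose an edge (u,v) maximizing deg u (c u v)
  have hne : (univ.filter fun p : Fin n × Fin n => p.1 ≠ p.2).Nonempty := by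
    refine ⟨(⟨0, by omega⟩, ⟨1, by omega⟩), ?_⟩
    simp [Fin.ext_iff]
  obtain ⟨p, hp, hmaxp⟩ := Finset.exists_max_image _
    (fun p : Fin n × Fin n => deg p.1 (c p.1 p.2)) hne
  obtain ⟨u, v⟩ := p
  simp only [mem_filter, mem_univ, true_and] at hp
  have hmax : ∀ a b : Fin n, a ≠ b → deg a (c a b) ≤ deg u (c u v) := by
    intro a b hab
    exact hmaxp (a, b) (by simp [hab])
  set al := c u v with hal
  set AB := univ.filter (fun w : Fin n => w ≠ u ∧ w ≠ v ∧ (c u w = al ∨ c v w = al)) with hABdef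
  set CC := univ.filter (fun w : Fin n => w ≠ u ∧ w ≠ v ∧ c u w ≠ al ∧ c v w ≠ al) with hCCdef
  have hABmem : ∀ x, x ∈ AB ↔ x ≠ u ∧ x ≠ v ∧ (c u x = al ∨ c v x = al) := by
    intro x; simp [hABdef]
  have hCCmem : ∀ x, x ∈ CC ↔ x ≠ u ∧ x ≠ v ∧ c u x ≠ al ∧ c v x ≠ al := by
    intro x; simp [hCCdef]
  -- on CC the two colors to u,v agree
  have hCf : ∀ w ∈ CC, c v w = c u w := by
    intro w hw
    rw [hCCmem] at hw
    rcases nr u v w hp (Ne.symm hw.1) (Ne.symm hw.2.1) with h | h | h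
    · exact absurd h.symm hw.2.2.1
    · exact absurd h.symm hw.2.2.2
    · exact h.symm
  have hABCC : ∀ x, x ∈ AB → x ∈ CC → False := by
    intro x h1 h2
    rw [hABmem] at h1; rw [hCCmem] at h2
    rcases h1.2.2 with h | h
    · exact h2.2.2.1 h
    · exact h2.2.2.2 h
  -- cardinalities: AB.card + CC.card + 2 = n
  have hcards : AB.card + CC.card + 2 = n := by
    have e1 : ((univ.filter fun w : Fin n => w ≠ u ∧ w ≠ v).filter
        (fun w => c u w = al ∨ c v w = al)) = AB := by
      rw [filter_filter, hABdef]
      apply filter_congr; intro x _; tauto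
    have e2 : ((univ.filter fun w : Fin n => w ≠ u ∧ w ≠ v).filter
        (fun w => ¬(c u w = al ∨ c v w = al))) = CC := by
      rw [filter_filter, hCCdef]
      apply filter_congr; intro x _
      constructor
      · rintro ⟨⟨h1, h2⟩, h3⟩; push_neg at h3; exact ⟨h1, h2, h3.1, h3.2⟩
      · rintro ⟨h1, h2, h3, h4⟩; exact ⟨⟨h1, h2⟩, by push_neg; exact ⟨h3, h4⟩⟩
    have e3 : (univ.filter fun w : Fin n => w ≠ u ∧ w ≠ v) = univ \ {u, v} := by
      ext x; simp [not_or]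
    have e4 : ({u, v} : Finset (Fin n)).card = 2 := by
      rw [card_insert_of_notMem (by simp [hp]), card_singleton]
    have e5 : (univ.filter fun w : Fin n => w ≠ u ∧ w ≠ v).card = n - 2 := by
      rw [e3, card_sdiff_of_subset (subset_univ _), e4, card_univ, Fintype.card_fin]
    have := Finset.card_filter_add_card_filter_not
      (s := univ.filter fun w : Fin n => w ≠ u ∧ w ≠ v)
      (p := fun w => c u w = al ∨ c v w = al)
    rw [e1, e2, e5] at this
    omega
  set Apart := AB.filter (fun w => c u w = al) with hApartdef
  set Bpart := AB.filter (fun w => c v w = al) with hBpartdef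
  have hdegu : deg u al = Apart.card + 1 := by
    have e : (univ.filter fun x => x ≠ u ∧ c u x = al) = insert v Apart := by
      ext x
      constructor
      · intro hx
        rw [mem_filter] at hx
        obtain ⟨-, h1, h2⟩ := hx
        by_cases hxv : x = v
        · exact mem_insert.mpr (Or.inl hxv)
        · refine mem_insert.mpr (Or.inr ?_)
          rw [hApartdef, mem_filter, hABmem]
          exact ⟨⟨h1, hxv, Or.inl h2⟩, h2⟩
      · intro hx
        rw [mem_filter]
        rcases mem_insert.mp hx with h | h
        · rw [h]; exact ⟨mem_univ _, Ne.symm hp, hal.symm⟩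
        · rw [hApartdef, mem_filter, hABmem] at h
          exact ⟨mem_univ _, h.1.1, h.2⟩
    have hv : v ∉ Apart := by
      intro hv
      rw [hApartdef, mem_filter, hABmem] at hv
      exact hv.1.2.1 rfl
    rw [hdeg_eq, e, card_insert_of_notMem hv]
  have hdegv : Bpart.card + 1 ≤ deg v al := by
    have e : insert u Bpart ⊆ (univ.filter fun x => x ≠ v ∧ c v x = al) := by
      intro x hx
      rcases mem_insert.mp hx with h | h
      · rw [mem_filter, h]
        exact ⟨mem_univ _, hp, (hsym v u).trans hal.symm⟩
      · rw [hBpartdef, mem_filter, hABmem] at h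
        rw [mem_filter]
        exact ⟨mem_univ _, h.1.2.1, h.2⟩
    have hu : u ∉ Bpart := by
      intro hu
      rw [hBpartdef, mem_filter, hABmem] at hu
      exact hu.1.1 rfl
    calc Bpart.card + 1 = (insert u Bpart).card := (card_insert_of_notMem hu).symm
    _ ≤ _ := card_le_card e
  have hABcover : AB.card ≤ Apart.card + Bpart.card := by
    have : AB ⊆ Apart ∪ Bpart := by
      intro x hx
      have hx' := (hABmem x).mp hx
      rcases hx'.2.2 with h | h
      · exact mem_union_left _ (by rw [hApartdef, mem_filter]; exact ⟨hx, h⟩)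
      · exact mem_union_right _ (by rw [hBpartdef, mem_filter]; exact ⟨hx, h⟩)
    calc AB.card ≤ (Apart ∪ Bpart).card := card_le_card this
    _ ≤ _ := card_union_le _ _
  have hdu4 : 4 * deg u al ≤ n := hdeg u al
  have hdv4 : 4 * deg v al ≤ n := hdeg v al
  -- CC is large
  have hCClb : AB.card + 2 ≤ CC.card := by omega
  have hCCne : CC.Nonempty := card_pos.mp (by omega)
  -- fibers and cross sets on CC (label of w is c u w)
  set fib : Fin n → Finset (Fin n) := fun w => CC.filter (fun x => c u x = c u w) with hfibdef
  set crs : Fin n → Finset (Fin n) := fun w => CC.filter (fun x => ¬ c u x = c u w) with hcrsdef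
  set ys : Fin n → Finset (Fin n) := fun w => AB.filter (fun x => c w x = c u w) with hysdef
  set zs : Fin n → Finset (Fin n) :=
    fun w => CC.filter (fun x => ¬ c u x = c u w ∧ c w x = c u w) with hzsdef
  set os : Fin n → Finset (Fin n) :=
    fun w => CC.filter (fun x => ¬ c u x = c u w ∧ c w x = c u x) with hosdef
  have hfibmem : ∀ w x, x ∈ fib w ↔ x ∈ CC ∧ c u x = c u w := by
    intro w x; simp only [hfibdef, mem_filter]
  have hcrsmem : ∀ w x, x ∈ crs w ↔ x ∈ CC ∧ ¬ c u x = c u w := by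
    intro w x; simp only [hcrsdef, mem_filter]
  have hysmem : ∀ w x, x ∈ ys w ↔ x ∈ AB ∧ c w x = c u w := by
    intro w x; simp only [hysdef, mem_filter]
  have hzsmem : ∀ w x, x ∈ zs w ↔ x ∈ CC ∧ (¬ c u x = c u w ∧ c w x = c u w) := by
    intro w x; simp only [hzsdef, mem_filter]
  have hosmem : ∀ w x, x ∈ os w ↔ x ∈ CC ∧ (¬ c u x = c u w ∧ c w x = c u x) := by
    intro w x; simp only [hosdef, mem_filter]
  have hsplit : ∀ w, (fib w).card + (crs w).card = CC.card := by
    intro w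
    simp only [hfibdef, hcrsdef]
    exact Finset.card_filter_add_card_filter_not (fun x => c u x = c u w)
  obtain ⟨w0, hw0, hpmax⟩ := Finset.exists_max_image CC (fun w => (fib w).card) hCCne
  set pm := (fib w0).card with hpmdef
  -- every AB-vertex is joined to w ∈ CC by color (c u w) or al
  have hcov : ∀ w ∈ CC, ∀ x ∈ AB, c w x = c u w ∨ c w x = al := by
    intro w hw x hx
    have hw' := (hCCmem w).mp hw
    have hx' := (hABmem x).mp hx
    have hxw : x ≠ w := fun heq => hABCC x hx (heq ▸ hw)
    have hvw := hCf w hw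
    rcases hx'.2.2 with h | h
    · rcases nr u w x (Ne.symm hw'.1) (Ne.symm hx'.1) hxw.symm with h1 | h1 | h1
      · exact absurd (h1.trans h) hw'.2.2.1
      · exact Or.inl h1.symm
      · exact Or.inr (h1.symm.trans h)
    · rcases nr v w x (Ne.symm hw'.2.1) (Ne.symm hx'.2.1) hxw.symm with h1 | h1 | h1
      · exact absurd ((hvw.symm.trans h1).trans h) hw'.2.2.1
      · exact Or.inl (h1.symm.trans hvw)
      · exact Or.inr (h1.symm.trans h)
  -- inequality (I)
  have hI : ∀ w ∈ CC, 4 * AB.card ≤ 4 * (ys w).card + n := by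
    intro w hw
    have hsub : AB ⊆ ys w ∪ AB.filter (fun x => c w x = al) := by
      intro x hx
      rcases hcov w hw x hx with h | h
      · exact mem_union_left _ ((hysmem w x).mpr ⟨hx, h⟩)
      · exact mem_union_right _ (mem_filter.mpr ⟨hx, h⟩)
    have h1 : AB.card ≤ (ys w).card + (AB.filter (fun x => c w x = al)).card :=
      (card_le_card hsub).trans (card_union_le _ _)
    have h2 : AB.filter (fun x => c w x = al) ⊆
        univ.filter (fun x => x ≠ w ∧ c w x = al) := by
      intro x hx
      rw [mem_filter] at hx
      have hxw : x ≠ w := fun heq => hABCC x hx.1 (heq ▸ hw)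
      exact mem_filter.mpr ⟨mem_univ _, hxw, hx.2⟩
    have h3 := card_le_card h2
    have h4 := hdeg w al
    omega
  -- inequality (II)
  have hII : ∀ w ∈ CC, 4 * (2 + (ys w).card + (zs w).card) ≤ n := by
    intro w hw
    have hw' := (hCCmem w).mp hw
    have hvw := hCf w hw
    have hsub : insert u (insert v (ys w ∪ zs w)) ⊆
        univ.filter (fun x => x ≠ w ∧ c w x = c u w) := by
      intro x hx
      refine mem_filter.mpr ⟨mem_univ _, ?_⟩
      rcases mem_insert.mp hx with h | hx2
      · rw [h]; exact ⟨Ne.symm hw'.1, hsym w u⟩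
      rcases mem_insert.mp hx2 with h | hx3
      · rw [h]; exact ⟨Ne.symm hw'.2.1, (hsym w v).trans hvw⟩
      rcases mem_union.mp hx3 with h | h
      · rw [hysmem] at h
        have hxw : x ≠ w := fun heq => hABCC x h.1 (heq ▸ hw)
        exact ⟨hxw, h.2⟩
      · rw [hzsmem] at h
        have hxw : x ≠ w := fun heq => h.2.1 (by rw [heq])
        exact ⟨hxw, h.2.2⟩
    have d1 : Disjoint (ys w) (zs w) := by
      rw [disjoint_left]; intro x h1 h2
      exact hABCC x ((hysmem w x).mp h1).1 ((hzsmem w x).mp h2).1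
    have hvnotin : v ∉ ys w ∪ zs w := by
      intro h
      rcases mem_union.mp h with h | h
      · exact ((hABmem v).mp ((hysmem w v).mp h).1).2.1 rfl
      · exact ((hCCmem v).mp ((hzsmem w v).mp h).1).2.1 rfl
    have hunotin : u ∉ insert v (ys w ∪ zs w) := by
      intro h
      rcases mem_insert.mp h with h | h
      · exact hp h
      rcases mem_union.mp h with h | h
      · exact ((hABmem u).mp ((hysmem w u).mp h).1).1 rfl
      · exact ((hCCmem u).mp ((hzsmem w u).mp h).1).1 rfl
    have hcard : (insert u (insert v (ys w ∪ zs w))).card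
        = 2 + (ys w).card + (zs w).card := by
      rw [card_insert_of_notMem hunotin, card_insert_of_notMem hvnotin,
        card_union_of_disjoint d1]
      ring
    have h5 := card_le_card hsub
    have h6 := hdeg w (c u w)
    omega
  -- inequality (III)
  have hIII : ∀ w ∈ CC, (crs w).card ≤ (zs w).card + (os w).card := by
    intro w hw
    have hw' := (hCCmem w).mp hw
    have hsub : crs w ⊆ zs w ∪ os w := by
      intro x hx
      rw [hcrsmem] at hx
      obtain ⟨hxC, hne⟩ := hx
      have hx' := (hCCmem x).mp hxC
      have hxw : x ≠ w := fun heq => hne (by rw [heq])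
      rcases nr u w x (Ne.symm hw'.1) (Ne.symm hx'.1) hxw.symm with h | h | h
      · exact absurd h.symm hne
      · exact mem_union_left _ ((hzsmem w x).mpr ⟨hxC, hne, h.symm⟩)
      · exact mem_union_right _ ((hosmem w x).mpr ⟨hxC, hne, h.symm⟩)
    exact (card_le_card hsub).trans (card_union_le _ _)
  -- double counting: sum of os-cards equals sum of zs-cards
  have hswap : ∑ w ∈ CC, (os w).card = ∑ w ∈ CC, (zs w).card := by
    have h1 : ∀ w, (os w).card
        = ∑ x ∈ CC, (if ¬ c u x = c u w ∧ c w x = c u x then 1 else 0) := by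
      intro w
      simp only [hosdef]
      rw [← Finset.card_filter]
    have h2 : ∀ w, (zs w).card
        = ∑ x ∈ CC, (if ¬ c u x = c u w ∧ c w x = c u w then 1 else 0) := by
      intro w
      simp only [hzsdef]
      rw [← Finset.card_filter]
    calc ∑ w ∈ CC, (os w).card
        = ∑ w ∈ CC, ∑ x ∈ CC, (if ¬ c u x = c u w ∧ c w x = c u x then 1 else 0) :=
          Finset.sum_congr rfl fun w _ => h1 w
      _ = ∑ x ∈ CC, ∑ w ∈ CC, (if ¬ c u x = c u w ∧ c w x = c u x then 1 else 0) :=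
          Finset.sum_comm
      _ = ∑ x ∈ CC, (zs x).card := by
          refine Finset.sum_congr rfl fun x _ => ?_
          rw [h2 x]
          refine Finset.sum_congr rfl fun w _ => ?_
          refine if_congr ?_ rfl rfl
          constructor
          · rintro ⟨ha, hb⟩; exact ⟨fun h => ha h.symm, (hsym x w).trans hb⟩
          · rintro ⟨ha, hb⟩; exact ⟨fun h => ha h.symm, (hsym w x).trans hb⟩
  -- global sums
  have hsum1 : ∑ w ∈ CC, ((fib w).card + (crs w).card) = CC.card * CC.card := by
    rw [Finset.sum_congr rfl fun w _ => hsplit w, Finset.sum_const, smul_eq_mul]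
  have hsum2 : ∑ w ∈ CC, (fib w).card ≤ CC.card * pm := by
    calc ∑ w ∈ CC, (fib w).card ≤ ∑ w ∈ CC, pm := Finset.sum_le_sum fun w hw => hpmax w hw
    _ = CC.card * pm := by rw [Finset.sum_const, smul_eq_mul]
  have hsum3 : ∑ w ∈ CC, (crs w).card ≤ 2 * ∑ w ∈ CC, (zs w).card := by
    calc ∑ w ∈ CC, (crs w).card
        ≤ ∑ w ∈ CC, ((zs w).card + (os w).card) := Finset.sum_le_sum hIII
      _ = ∑ w ∈ CC, (zs w).card + ∑ w ∈ CC, (os w).card := Finset.sum_add_distrib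
      _ = 2 * ∑ w ∈ CC, (zs w).card := by rw [hswap]; ring
  have hsum4 : 4 * ∑ w ∈ CC, (zs w).card + CC.card * (4 * AB.card + 8)
      ≤ CC.card * (2 * n) := by
    have hper : ∀ w ∈ CC, 4 * (zs w).card + (4 * AB.card + 8) ≤ 2 * n := by
      intro w hw
      have := hI w hw
      have := hII w hw
      omega
    calc 4 * ∑ w ∈ CC, (zs w).card + CC.card * (4 * AB.card + 8)
        = ∑ w ∈ CC, (4 * (zs w).card + (4 * AB.card + 8)) := by
          rw [Finset.sum_add_distrib, Finset.sum_const, smul_eq_mul, Finset.mul_sum]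
      _ ≤ ∑ w ∈ CC, 2 * n := Finset.sum_le_sum hper
      _ = CC.card * (2 * n) := by rw [Finset.sum_const, smul_eq_mul]
  have hmain : CC.card * CC.card ≤ CC.card * pm + 2 * ∑ w ∈ CC, (zs w).card := by
    calc CC.card * CC.card = ∑ w ∈ CC, ((fib w).card + (crs w).card) := hsum1.symm
    _ = ∑ w ∈ CC, (fib w).card + ∑ w ∈ CC, (crs w).card := Finset.sum_add_distrib
    _ ≤ CC.card * pm + 2 * ∑ w ∈ CC, (zs w).card := Nat.add_le_add hsum2 hsum3
  -- conclude pm ≥ AB.card + 2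
  have hpm2 : AB.card + 2 ≤ pm := by
    set a := CC.card with hadef
    set Z := ∑ w ∈ CC, (zs w).card with hZdef
    have h1 : a * (2 * a + (4 * AB.card + 8)) ≤ a * (2 * pm + 2 * n) := by
      nlinarith [hsum4, hmain]
    have h2 : 2 * a + (4 * AB.card + 8) ≤ 2 * pm + 2 * n :=
      Nat.le_of_mul_le_mul_left h1 (by omega)
    omega
  -- final contradiction with the maximality of deg u al
  have hfin1 : pm ≤ deg u (c u w0) := by
    have hsub : fib w0 ⊆ univ.filter (fun x => x ≠ u ∧ c u x = c u w0) := by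
      intro x hx
      rw [hfibmem] at hx
      exact mem_filter.mpr ⟨mem_univ _, ((hCCmem x).mp hx.1).1, hx.2⟩
    rw [hdeg_eq]
    exact card_le_card hsub
  have hfin2 : deg u (c u w0) ≤ deg u al :=
    hmax u w0 (fun h => ((hCCmem w0).mp hw0).1 h.symm)
  have hfin3 : Apart.card ≤ AB.card := card_le_card (filter_subset _ _)
  omega
end
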